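/- arXiv:math/0312350 — 6 statements merged into one kernel-verified Lean document; each statement's English description precedes it below -/
import Mathlib

section
/- Let C be a cycle of a permutation in T_{p,q}(r,s) containing r_i steps congruent to 1 mod p and s_i steps congruent to q mod p, so that p divides r_i + q·s_i; write ℓ_i = (r_i + q·s_i)/p. Then gcd(r_i, s_i, ℓ_i) = 1. -/
open Finset

/-- `T_{p,q}(r,s)`: permutations of `{1,…,p}` (modeled as `ZMod p`) with exactly `p-r-s` fixed
points, exactly `r` indices with `σ j - j ≡ 1`, and exactly `s` indices with `σ j - j ≡ q`. -/
def Tset (p q r s : ℕ) [NeZero p] : Set (Equiv.Perm (ZMod p)) :=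
  {σ | (Finset.univ.filter fun j : ZMod p => σ j = j).card = p - r - s ∧
       (Finset.univ.filter fun j : ZMod p => σ j - j = 1).card = r ∧
       (Finset.univ.filter fun j : ZMod p => σ j - j = (q : ZMod p)).card = s}

lemma window_sum_const {f : ℕ → ℕ} {n : ℕ} (hf : ∀ k, f (k + n) = f k) (a : ℕ) :
    ∑ k ∈ range n, f (a + k) = ∑ k ∈ range n, f k := by
  induction a with
  | zero => simp
  | succ a ih =>
    rcases Nat.eq_zero_or_pos n with hn | hn
    · simp [hn]
    obtain ⟨n', rfl⟩ : ∃ n', n = n' + 1 := ⟨n - 1, (Nat.succ_pred_eq_of_pos hn).symm⟩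
    rw [← ih]
    rw [Finset.sum_range_succ' (fun k => f (a + k)), Finset.sum_range_succ]
    have h1 : ∀ k, a + 1 + k = a + (k + 1) := by omega
    have h2 : a + 1 + n' = a + (n' + 1) := by omega
    simp only [h1, h2, hf a]
    rw [add_zero, add_comm]

lemma discrete_ivt {b : ℕ → ℕ} {n B : ℕ} (hn : 0 < n)
    (hstep : ∀ k, b (k + 1) ≤ b k + 1 ∧ b k ≤ b (k + 1) + 1)
    (hsum : ∑ k ∈ range n, b k = n * B) : ∃ k, b k = B := by
  by_contra h
  push_neg at h
  rcases lt_or_gt_of_ne (h 0) with h0 | h0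
  · have hall : ∀ k, b k + 1 ≤ B := by
      intro k
      induction k with
      | zero => omega
      | succ k ih => have := hstep k; have := h (k + 1); omega
    have : ∑ k ∈ range n, b k + n ≤ n * B := by
      calc ∑ k ∈ range n, b k + n = ∑ k ∈ range n, (b k + 1) := by
            rw [Finset.sum_add_distrib]; simp
        _ ≤ ∑ _k ∈ range n, B := Finset.sum_le_sum fun k _ => hall k
        _ = n * B := by simp [mul_comm]
    omega
  · have hall : ∀ k, B + 1 ≤ b k := by
      intro k
      induction k with
      | zero => omega
      | succ k ih => have := hstep k; have := h (k + 1); omega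
    have : n * B + n ≤ ∑ k ∈ range n, b k := by
      calc n * B + n = ∑ _k ∈ range n, (B + 1) := by simp [mul_comm, Nat.mul_succ]
        _ ≤ ∑ k ∈ range n, b k := Finset.sum_le_sum fun k _ => hall k
    omega

/-- For any nontrivial cycle `C` of a permutation in `T_{p,q}(r,s)`, with `rᵢ` 1-steps and `sᵢ`
q-steps, one has `p ∣ rᵢ + q·sᵢ`, and with `ℓᵢ = (rᵢ + q·sᵢ)/p`, `gcd(rᵢ, sᵢ, ℓᵢ) = 1`. -/
theorem cycle_gcd_eq_one (p q r s : ℕ) [NeZero p] (hq : 1 < q) (hqp : q < p)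
    (σ : Equiv.Perm (ZMod p)) (hσ : σ ∈ Tset p q r s)
    (C : Equiv.Perm (ZMod p)) (hC : C ∈ σ.cycleFactorsFinset)
    (ri si : ℕ)
    (hri : (C.support.filter fun j => C j - j = 1).card = ri)
    (hsi : (C.support.filter fun j => C j - j = (q : ZMod p)).card = si) :
    p ∣ ri + q * si ∧ Nat.gcd (Nat.gcd ri si) ((ri + q * si) / p) = 1 := by
  obtain ⟨hfix, hone, hqs⟩ := hσ
  obtain ⟨hcyc, hagree⟩ := Equiv.Perm.mem_cycleFactorsFinset_iff.mp hC
  have hp3 : 3 ≤ p := by omega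
  haveI : Fact (1 < p) := ⟨by omega⟩
  have h1ne0 : (1 : ZMod p) ≠ 0 := one_ne_zero
  have hqne0 : (q : ZMod p) ≠ 0 := by
    intro h
    rw [ZMod.natCast_eq_zero_iff] at h
    have hd := h
    have := Nat.le_of_dvd (by omega) hd
    omega
  have hqne1 : (q : ZMod p) ≠ 1 := by
    intro h
    have h' : ((q : ℕ) : ZMod p) = ((1 : ℕ) : ZMod p) := by simpa using h
    rw [ZMod.natCast_eq_natCast_iff] at h'
    have h'' := (Nat.modEq_iff_dvd' (by omega)).mp h'.symm
    have := Nat.le_of_dvd (by omega) h''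
    omega
  -- every non-fixed point moves by 1 or q
  have key : ∀ j : ZMod p, σ j ≠ j → σ j - j = 1 ∨ σ j - j = (q : ZMod p) := by
    intro j hj
    by_contra hcon
    push_neg at hcon
    set A := Finset.univ.filter (fun j : ZMod p => σ j = j) with hA
    set B1 := Finset.univ.filter (fun j : ZMod p => σ j - j = 1) with hB1
    set Bq := Finset.univ.filter (fun j : ZMod p => σ j - j = (q : ZMod p)) with hBq
    have hd12 : Disjoint B1 Bq := by
      rw [Finset.disjoint_left]
      intro a ha hb
      rw [hB1, Finset.mem_filter] at ha
      rw [hBq, Finset.mem_filter] at hb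
      exact hqne1 (hb.2 ▸ ha.2 ▸ rfl)
    have hdA1 : Disjoint A B1 := by
      rw [Finset.disjoint_left]
      intro a ha hb
      rw [hA, Finset.mem_filter] at ha
      rw [hB1, Finset.mem_filter] at hb
      rw [ha.2, sub_self] at hb
      exact h1ne0 hb.2.symm
    have hdAq : Disjoint A Bq := by
      rw [Finset.disjoint_left]
      intro a ha hb
      rw [hA, Finset.mem_filter] at ha
      rw [hBq, Finset.mem_filter] at hb
      rw [ha.2, sub_self] at hb
      exact hqne0 hb.2.symm
    have hrs_le : r + s ≤ p := by
      have : (B1 ∪ Bq).card = r + s := by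
        rw [Finset.card_union_of_disjoint hd12, ← hB1, ← hBq] at *
        rw [hone, hqs]
      have h2 := Finset.card_le_univ (B1 ∪ Bq)
      rw [this, ZMod.card] at h2
      exact h2
    have hcard : (A ∪ B1 ∪ Bq).card = p := by
      rw [Finset.card_union_of_disjoint (by
            rw [Finset.disjoint_union_left]; exact ⟨hdAq, hd12⟩),
          Finset.card_union_of_disjoint hdA1]
      rw [hfix, hone, hqs]
      omega
    have huniv : A ∪ B1 ∪ Bq = Finset.univ := by
      apply Finset.eq_univ_of_card
      rw [hcard, ZMod.card]
    have hj' : j ∈ A ∪ B1 ∪ Bq := huniv ▸ Finset.mem_univ j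
    rcases Finset.mem_union.mp hj' with hj'' | hj''
    · rcases Finset.mem_union.mp hj'' with hj3 | hj3
      · rw [hA, Finset.mem_filter] at hj3; exact hj hj3.2
      · rw [hB1, Finset.mem_filter] at hj3; exact hcon.1 hj3.2
    · rw [hBq, Finset.mem_filter] at hj''; exact hcon.2 hj''.2
  -- steps of C on its support
  have hCstep : ∀ j ∈ C.support, C j - j = 1 ∨ C j - j = (q : ZMod p) := by
    intro j hj
    have hCj := hagree j hj
    have hne : σ j ≠ j := by rw [← hCj]; exact Equiv.Perm.mem_support.mp hj
    rw [hCj]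
    exact key j hne
  set n := C.support.card with hn
  have hn2 : 2 ≤ n := hcyc.two_le_card_support
  -- support splits as the 1-steps and the q-steps
  have hdisj : Disjoint (C.support.filter fun j => C j - j = 1)
      (C.support.filter fun j => C j - j = (q : ZMod p)) := by
    rw [Finset.disjoint_left]
    intro a ha hb
    rw [Finset.mem_filter] at ha hb
    exact hqne1 (hb.2 ▸ ha.2 ▸ rfl)
  have hsplit : (C.support.filter fun j => C j - j = 1) ∪
      (C.support.filter fun j => C j - j = (q : ZMod p)) = C.support := by
    rw [← Finset.filter_or]
    exact Finset.filter_true_of_mem hCstep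
  have hn_eq : ri + si = n := by
    rw [← hri, ← hsi, ← Finset.card_union_of_disjoint hdisj, hsplit]
  -- Part 1: the sum of displacements over the cycle vanishes mod p
  have hcast0 : ((ri + q * si : ℕ) : ZMod p) = 0 := by
    have h0 : ∑ j ∈ C.support, (C j - j) = 0 := by
      rw [Finset.sum_sub_distrib]
      have hsc := Equiv.Perm.sum_comp C C.support (fun x => x)
        (fun a ha => Finset.mem_coe.mpr (Equiv.Perm.mem_support.mpr ha))
      rw [hsc]
      exact sub_self _
    rw [← hsplit, Finset.sum_union hdisj] at h0
    have e1 : ∑ j ∈ C.support.filter (fun j => C j - j = 1), (C j - j) = (ri : ZMod p) := by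
      rw [Finset.sum_congr rfl (fun j hj => (Finset.mem_filter.mp hj).2)]
      rw [Finset.sum_const, hri, nsmul_eq_mul, mul_one]
    have e2 : ∑ j ∈ C.support.filter (fun j => C j - j = (q : ZMod p)), (C j - j)
        = (si : ZMod p) * (q : ZMod p) := by
      rw [Finset.sum_congr rfl (fun j hj => (Finset.mem_filter.mp hj).2)]
      rw [Finset.sum_const, hsi, nsmul_eq_mul]
    rw [e1, e2] at h0
    push_cast
    linear_combination h0
  have hdvd : p ∣ ri + q * si := (ZMod.natCast_eq_zero_iff _ p).mp hcast0
  refine ⟨hdvd, ?_⟩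
  -- Part 2
  set ℓ := (ri + q * si) / p with hℓ
  have hℓp : ℓ * p = ri + q * si := Nat.div_mul_cancel hdvd
  set d := Nat.gcd (Nat.gcd ri si) ℓ with hd
  by_contra hd1
  have hdg : d ∣ Nat.gcd ri si := Nat.gcd_dvd_left _ _
  have hdri : d ∣ ri := dvd_trans hdg (Nat.gcd_dvd_left ri si)
  have hdsi : d ∣ si := dvd_trans hdg (Nat.gcd_dvd_right ri si)
  have hdl : d ∣ ℓ := Nat.gcd_dvd_right _ _
  have hd0 : d ≠ 0 := by
    intro h0
    rw [h0] at hdri hdsi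
    simp at hdri hdsi
    omega
  have hd2 : 2 ≤ d := by omega
  have hdn : d ∣ n := by rw [← hn_eq]; exact Nat.dvd_add hdri hdsi
  set m := n / d with hm
  set B := si / d with hB
  have hdm : d * m = n := Nat.mul_div_cancel' hdn
  have hdB : d * B = si := Nat.mul_div_cancel' hdsi
  have hm1 : 1 ≤ m := by
    rcases Nat.eq_zero_or_pos m with h | h
    · rw [h, mul_zero] at hdm; omega
    · exact h
  have hmn : m < n := by nlinarith
  obtain ⟨x, hx⟩ := Finset.card_pos.mp (show 0 < C.support.card by rw [← hn]; omega)
  set pt : ℕ → ZMod p := fun k => (C ^ k) x with hptdef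
  have hpt0 : pt 0 = x := by simp [hptdef]
  have hpt_succ : ∀ k, pt (k + 1) = C (pt k) := by
    intro k
    simp [hptdef, pow_succ', Equiv.Perm.mul_apply]
  have hpt_mem : ∀ k, pt k ∈ C.support := by
    intro k
    induction k with
    | zero => rw [hpt0]; exact hx
    | succ k ih => rw [hpt_succ]; exact Equiv.Perm.apply_mem_support.mpr ih
  have ho : orderOf C = n := hcyc.orderOf
  have hCn1 : C ^ n = 1 := by rw [← ho]; exact pow_orderOf_eq_one C
  have hper : ∀ k, pt (k + n) = pt k := by
    intro k
    simp [hptdef, pow_add, hCn1, Equiv.Perm.mul_apply]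
  have hfixpow : ∀ m' k, 0 < m' → m' < n → pt (k + m') ≠ pt k := by
    intro m' k hm0 hmn' heq
    have h1 : (C ^ m') (pt k) = pt k := by
      have h2 : pt (k + m') = (C ^ m') (pt k) := by
        rw [add_comm]
        simp [hptdef, pow_add, Equiv.Perm.mul_apply]
      rw [← h2, heq]
    have h2 : C ^ m' = 1 :=
      hcyc.pow_eq_one_iff.mpr ⟨pt k, Equiv.Perm.mem_support.mp (hpt_mem k), h1⟩
    have h3 : n ∣ m' := by rw [← ho]; exact orderOf_dvd_of_pow_eq_one h2
    exact absurd (Nat.le_of_dvd hm0 h3) (by omega)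
  set f : ℕ → ℕ := fun k => if C (pt k) - pt k = (q : ZMod p) then 1 else 0 with hfdef
  have hf01 : ∀ k, f k ≤ 1 := by intro k; simp only [hfdef]; split <;> omega
  have hf_per : ∀ k, f (k + n) = f k := by intro k; simp only [hfdef, hper]
  have hinj : ∀ a b, a < b → b < n → pt a ≠ pt b := by
    intro a b hab hbn heq
    exact hfixpow (b - a) a (by omega) (by omega)
      (by rw [show a + (b - a) = b by omega]; exact heq.symm)
  have hinj' : ∀ a ∈ range n, ∀ b ∈ range n, pt a = pt b → a = b := by
    intro a ha b hb hab
    rw [Finset.mem_range] at ha hb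
    rcases Nat.lt_trichotomy a b with h | h | h
    · exact absurd hab (hinj a b h hb)
    · exact h
    · exact absurd hab.symm (hinj b a h ha)
  have himg : (range n).image pt = C.support := by
    apply Finset.eq_of_subset_of_card_le
    · intro j hj
      obtain ⟨k, _, rfl⟩ := Finset.mem_image.mp hj
      exact hpt_mem k
    · rw [Finset.card_image_of_injOn
        (fun a ha b hb hab => hinj' a (by simpa using ha) b (by simpa using hb) hab),
        Finset.card_range]
  have hsi_count : ∑ k ∈ range n, f k = si := by
    rw [← hsi, Finset.card_filter, ← himg, Finset.sum_image hinj']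
  set b : ℕ → ℕ := fun k => ∑ i ∈ range m, f (k + i) with hbdef
  have hb_sum : ∑ k ∈ range n, b k = n * B := by
    simp only [hbdef]
    rw [Finset.sum_comm]
    have hrow : ∀ i, ∑ k ∈ range n, f (k + i) = si := by
      intro i
      rw [← hsi_count, ← window_sum_const hf_per i]
      exact Finset.sum_congr rfl fun k _ => by rw [add_comm]
    rw [Finset.sum_congr rfl fun i _ => hrow i, Finset.sum_const, Finset.card_range,
      smul_eq_mul]
    rw [← hdB, ← hdm]; ring
  have hb_step : ∀ k, b (k + 1) ≤ b k + 1 ∧ b k ≤ b (k + 1) + 1 := by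
    intro k
    have hid : b k + f (k + m) = f k + b (k + 1) := by
      simp only [hbdef]
      rw [← Finset.sum_range_succ (fun i => f (k + i)) m]
      rw [Finset.sum_range_succ' (fun i => f (k + i)) m]
      simp only [add_zero]
      rw [add_comm]
      congr 1
      exact Finset.sum_congr rfl fun i _ => by rw [show k + (i + 1) = k + 1 + i by omega]
    have := hf01 k; have := hf01 (k + m); omega
  obtain ⟨k, hk⟩ := discrete_ivt (show 0 < n by omega) hb_step hb_sum
  have hwin : pt (k + m) - pt k = ((m + (q - 1) * B : ℕ) : ZMod p) := by
    have htel : ∑ i ∈ range m, (pt (k + (i + 1)) - pt (k + i)) = pt (k + m) - pt k := by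
      have h := Finset.sum_range_sub (fun i => pt (k + i)) m
      simpa using h
    have hterm : ∀ i, pt (k + (i + 1)) - pt (k + i)
        = (1 : ZMod p) + ((f (k + i) : ℕ) : ZMod p) * ((q : ZMod p) - 1) := by
      intro i
      rw [show k + (i + 1) = (k + i) + 1 by omega, hpt_succ]
      rcases hCstep (pt (k + i)) (hpt_mem (k + i)) with h | h
      · have hf0 : f (k + i) = 0 := by
          simp only [hfdef]
          rw [if_neg]
          rw [h]
          exact fun hh => hqne1 hh.symm
        rw [h, hf0]; push_cast; ring
      · have hf1 : f (k + i) = 1 := by simp only [hfdef]; rw [if_pos h]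
        rw [h, hf1]; push_cast; ring
    rw [← htel, Finset.sum_congr rfl fun i _ => hterm i, Finset.sum_add_distrib]
    rw [Finset.sum_const, Finset.card_range, ← Finset.sum_mul]
    have hcast : (∑ i ∈ range m, ((f (k + i) : ℕ) : ZMod p)) = ((b k : ℕ) : ZMod p) := by
      simp only [hbdef]
      push_cast
      rfl
    rw [hcast, hk]
    push_cast [Nat.cast_sub hq.le, nsmul_eq_mul]
    ring
  have harith : m + (q - 1) * B = (ℓ / d) * p := by
    have hdl' : d * (ℓ / d) = ℓ := Nat.mul_div_cancel' hdl
    have key2 : d * (m + (q - 1) * B) = d * m + (q - 1) * (d * B) := by ring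
    rw [hdm, hdB] at key2
    have hle : si ≤ q * si := Nat.le_mul_of_pos_left si (by omega)
    have h6 : n + (q - 1) * si = ri + q * si := by
      rw [← hn_eq, Nat.sub_mul, one_mul, add_assoc, Nat.add_sub_cancel' hle]
    have h7 : d * (m + (q - 1) * B) = d * ((ℓ / d) * p) := by
      rw [key2, h6, ← hℓp]
      conv_lhs => rw [← hdl']
      ring
    exact Nat.eq_of_mul_eq_mul_left (by omega) h7
  have hzero : ((m + (q - 1) * B : ℕ) : ZMod p) = 0 := by
    rw [harith]
    push_cast [ZMod.natCast_self]
    ring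
  rw [hzero] at hwin
  exact hfixpow m k (by omega) hmn (sub_eq_zero.mp hwin)
end

section
/- Any two nontrivial cycles of a permutation σ ∈ T_{p,q}(r,s) contain the same number of 1-steps and the same number of q-steps; that is, if the cycles C_1,...,C_k of σ have r_i 1-steps and s_i q-steps, then r_1 = r_2 = ... = r_k and s_1 = s_2 = ... = s_k. -/
open Finset

/-!
Let `B` be the set of `q`-steps of `σ` and let `⌈u⌉` be the first point of `B` reached by
walking upwards from `u` in `ZMod p` (`cyclicCeil`). From `y ∈ B` the permutation jumps to
`y + q` and then makes `1`-steps until it is back in `B`, so `ρ y = ⌈y + q⌉` is the first-return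
map of `σ` to `B`, while `N y = ⌈y + 1⌉` is the cyclic successor in `B`. Because `ρ` is injective
on `B`, it commutes with `N` there. As `N` runs through all of `B`, a power of `N` maps the
`q`-steps of one cycle injectively into those of any other, so every cycle carrying a `q`-step has
the same number of them. Summing `σ j - j` over a cycle `C` gives `r_C + q s_C ≡ 0 (mod p)`; this
shows that a nontrivial cycle other than a full rotation carries a `q`-step, and, since `r_C < p`,
it determines `r_C` from `s_C`.
-/

open Function
open Set (MapsTo InjOn SurjOn)

def IsFirstReturn {α : Type*} (f g : α → α) (B : Set α) : Prop :=
  ∀ x ∈ B, ∃ n, 0 < n ∧ f^[n] x = g x ∧ g x ∈ B ∧ ∀ i, 0 < i → i < n → f^[i] x ∉ B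

namespace IsFirstReturn

variable {α : Type*} {f g : α → α} {B : Set α}

theorem mapsTo (h : IsFirstReturn f g B) : MapsTo g B B := fun x hx =>
  let ⟨_, _, _, hgx, _⟩ := h x hx
  hgx

theorem injOn (h : IsFirstReturn f g B) (hf : Injective f) : InjOn g B := by
  intro x hx y hy hxy
  obtain ⟨n, hn0, hn, -, hnB⟩ := h x hx
  obtain ⟨m, hm0, hm, -, hmB⟩ := h y hy
  wlog hnm : n ≤ m generalizing x y n m
  · exact (this hy hx hxy.symm m hm0 hm hmB n hn0 hn hnB (by omega)).symm
  have hxy' : x = f^[m - n] y :=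
    hf.iterate n (by rw [← iterate_add_apply, Nat.add_sub_cancel' hnm, hn, hm, hxy])
  rcases Nat.eq_zero_or_pos (m - n) with h0 | h0
  · simpa [h0] using hxy'
  · exact absurd (hxy' ▸ hx) (hmB _ h0 (by omega))

theorem exists_iterate_eq_of_iterate_eq (h : IsFirstReturn f g B) {x y : α} (hx : x ∈ B)
    (hy : y ∈ B) {k : ℕ} (hk : f^[k] x = y) : ∃ m, g^[m] x = y := by
  induction k using Nat.strong_induction_on generalizing x with
  | _ k ih =>
  obtain ⟨n, hn0, hn, hgx, hnB⟩ := h x hx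
  rcases Nat.eq_zero_or_pos k with rfl | hk0
  · exact ⟨0, hk⟩
  have hnk : n ≤ k := by
    by_contra! hkn
    exact hnB k hk0 hkn (hk ▸ hy)
  obtain ⟨m, hm⟩ := ih (k - n) (by omega) hgx
    (by rwa [← hn, ← iterate_add_apply, Nat.sub_add_cancel hnk])
  exact ⟨m + 1, by rwa [iterate_succ_apply]⟩

theorem exists_iterate_eq_iterate (h : IsFirstReturn f g B) {x : α} (hx : x ∈ B) (m : ℕ) :
    ∃ k, f^[k] x = g^[m] x := by
  induction m with
  | zero => exact ⟨0, rfl⟩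
  | succ m ih =>
    obtain ⟨k, hk⟩ := ih
    obtain ⟨n, -, hn, -, -⟩ := h _ (h.mapsTo.iterate m hx)
    exact ⟨n + k, by rw [iterate_add_apply, hk, hn, iterate_succ_apply']⟩

end IsFirstReturn

theorem iterate_comm_of_mapsTo {α : Type*} {f g : α → α} {s : Set α} (hf : MapsTo f s s)
    (hg : MapsTo g s s) (h : ∀ x ∈ s, f (g x) = g (f x)) (m n : ℕ) {x : α} (hx : x ∈ s) :
    f^[m] (g^[n] x) = g^[n] (f^[m] x) := by
  have hc : Function.Commute (hf.restrict f s s) (hg.restrict g s s) := fun y =>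
    Subtype.ext (h y y.2)
  simpa [Set.MapsTo.iterate_restrict] using congrArg Subtype.val (hc.iterate_iterate m n ⟨x, hx⟩)

theorem IsFirstReturn.sameCycle_iff {α : Type*} [Finite α] {σ : Equiv.Perm α} {ρ : α → α}
    {B : Set α} (hρ : IsFirstReturn σ ρ B) {x y : α} (hx : x ∈ B)
    (hy : y ∈ B) : σ.SameCycle x y ↔ ∃ m, ρ^[m] x = y := by
  constructor
  · intro hxy
    obtain ⟨k, hk⟩ := hxy.exists_nat_pow_eq
    exact hρ.exists_iterate_eq_of_iterate_eq hx hy (k := k) (by rwa [Equiv.Perm.iterate_eq_pow])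
  · rintro ⟨m, rfl⟩
    obtain ⟨k, hk⟩ := hρ.exists_iterate_eq_iterate hx m
    exact ⟨k, by rw [zpow_natCast, ← Equiv.Perm.iterate_eq_pow, hk]⟩

section SameCycle

variable {α : Type*} [Fintype α] [DecidableEq α] {σ : Equiv.Perm α} {B : Finset α} {ρ N : α → α}

theorem card_filter_sameCycle_le (hρ : IsFirstReturn σ ρ B) (hN : MapsTo N B B)
    (hNinj : InjOn N B) (hcomm : ∀ x ∈ B, N (ρ x) = ρ (N x)) {a : α} (ha : a ∈ B) (j : ℕ) :
    #(B.filter (σ.SameCycle a)) ≤ #(B.filter (σ.SameCycle (N^[j] a))) := by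
  have hb : N^[j] a ∈ B := hN.iterate j ha
  refine card_le_card_of_injOn N^[j] (fun x hx => ?_) ((hNinj.iterate hN j).mono ?_)
  · rw [coe_filter] at hx
    obtain ⟨hxB, hax⟩ := hx
    obtain ⟨m, rfl⟩ := (hρ.sameCycle_iff ha hxB).mp hax
    rw [coe_filter, iterate_comm_of_mapsTo hN hρ.mapsTo hcomm j m ha]
    exact ⟨hρ.mapsTo.iterate m hb, (hρ.sameCycle_iff hb (hρ.mapsTo.iterate m hb)).mpr ⟨m, rfl⟩⟩
  · exact fun x hx => (mem_filter.mp hx).1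

theorem card_filter_sameCycle_eq (hρ : IsFirstReturn σ ρ B) (hN : MapsTo N B B)
    (hNinj : InjOn N B) (hcomm : ∀ x ∈ B, N (ρ x) = ρ (N x))
    (htrans : ∀ a ∈ B, ∀ b ∈ B, ∃ j, N^[j] a = b) {a b : α} (ha : a ∈ B) (hb : b ∈ B) :
    #(B.filter (σ.SameCycle a)) = #(B.filter (σ.SameCycle b)) := by
  obtain ⟨j, rfl⟩ := htrans a ha b hb
  obtain ⟨i, hi⟩ := htrans _ hb a ha
  refine le_antisymm (card_filter_sameCycle_le hρ hN hNinj hcomm ha j) ?_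
  simpa [hi] using card_filter_sameCycle_le hρ hN hNinj hcomm hb i

end SameCycle

theorem ZMod.natCast_inj_of_lt {p a b : ℕ} (ha : a < p) (hb : b < p) (h : (a : ZMod p) = b) :
    a = b := by
  have := congrArg ZMod.val h
  rwa [ZMod.val_natCast_of_lt ha, ZMod.val_natCast_of_lt hb] at this

section CyclicCeil

variable {p : ℕ} [NeZero p] {B : Finset (ZMod p)}

theorem Finset.Nonempty.exists_add_natCast_mem (hB : B.Nonempty) (u : ZMod p) :
    ∃ i : ℕ, u + i ∈ B :=
  let ⟨b, hb⟩ := hB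
  ⟨(b - u).val, by rwa [ZMod.natCast_zmod_val, add_sub_cancel]⟩

def cyclicCeilDist (hB : B.Nonempty) (u : ZMod p) : ℕ := Nat.find (hB.exists_add_natCast_mem u)

def cyclicCeil (hB : B.Nonempty) (u : ZMod p) : ZMod p := u + cyclicCeilDist hB u

theorem cyclicCeil_mem (hB : B.Nonempty) (u : ZMod p) : cyclicCeil hB u ∈ B :=
  Nat.find_spec (hB.exists_add_natCast_mem u)

theorem add_notMem_of_lt_cyclicCeilDist (hB : B.Nonempty) {u : ZMod p} {i : ℕ}
    (hi : i < cyclicCeilDist hB u) : u + i ∉ B :=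
  Nat.find_min _ hi

theorem le_cyclicCeilDist_iff (hB : B.Nonempty) {u : ZMod p} {j : ℕ} :
    j ≤ cyclicCeilDist hB u ↔ ∀ i < j, u + (i : ZMod p) ∉ B :=
  Nat.le_find_iff _ _

theorem cyclicCeilDist_lt (hB : B.Nonempty) (u : ZMod p) : cyclicCeilDist hB u < p := by
  obtain ⟨b, hb⟩ := hB
  refine (Nat.find_le ?_).trans_lt (ZMod.val_lt (b - u))
  rwa [ZMod.natCast_zmod_val, add_sub_cancel]

theorem cyclicCeil_add_of_le (hB : B.Nonempty) {u : ZMod p} {i : ℕ}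
    (hi : i ≤ cyclicCeilDist hB u) : cyclicCeil hB (u + i) = cyclicCeil hB u := by
  have hd : cyclicCeilDist hB (u + i) = cyclicCeilDist hB u - i := by
    refine le_antisymm (Nat.find_le ?_) ((le_cyclicCeilDist_iff hB).mpr fun j hj => ?_)
    · rw [Nat.cast_sub hi, add_add_sub_cancel]
      exact cyclicCeil_mem hB u
    · rw [add_assoc, ← Nat.cast_add]
      exact add_notMem_of_lt_cyclicCeilDist hB (by omega)
  rw [cyclicCeil, hd, Nat.cast_sub hi, add_add_sub_cancel]
  rfl

theorem cyclicCeil_add_one (hB : B.Nonempty) (y : ZMod p) :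
    cyclicCeil hB (y + 1) = y + (cyclicCeilDist hB (y + 1) + 1 : ℕ) := by
  rw [cyclicCeil]
  push_cast
  ring

theorem add_notMem_of_le_cyclicCeilDist_add_one (hB : B.Nonempty) {y : ZMod p} {k : ℕ}
    (hk0 : 0 < k) (hk : k ≤ cyclicCeilDist hB (y + 1)) : y + k ∉ B := by
  have := add_notMem_of_lt_cyclicCeilDist hB (u := y + 1) (i := k - 1) (by omega)
  simpa [add_assoc, Nat.cast_sub (show 1 ≤ k by omega)] using this

theorem isFirstReturn_add_one (hB : B.Nonempty) :
    IsFirstReturn (· + 1) (fun y => cyclicCeil hB (y + 1)) B := by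
  intro y _
  refine ⟨cyclicCeilDist hB (y + 1) + 1, by omega, ?_, cyclicCeil_mem hB _, fun i hi0 hi => ?_⟩
  · simp only [add_right_iterate, nsmul_eq_mul, mul_one, cyclicCeil_add_one]
  · simpa using add_notMem_of_le_cyclicCeilDist_add_one hB (y := y) hi0 (by omega)

section Commute

variable (hB : B.Nonempty) {c : ZMod p} (hinj : InjOn (fun y => cyclicCeil hB (y + c)) B)
  {y : ZMod p} (hy : y ∈ B)
include hinj hy

theorem cyclicCeilDist_add_le_cyclicCeilDist_add_one :
    cyclicCeilDist hB (y + c) ≤ cyclicCeilDist hB (y + 1) := by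
  by_contra! h
  have h1 : cyclicCeil hB (cyclicCeil hB (y + 1) + c) = cyclicCeil hB (y + c) := by
    rw [cyclicCeil_add_one, add_right_comm]
    exact cyclicCeil_add_of_le hB h
  have h2 := hinj (cyclicCeil_mem hB (y + 1)) hy h1
  rw [cyclicCeil_add_one, add_eq_left, ZMod.natCast_eq_zero_iff] at h2
  have := Nat.le_of_dvd (by omega) h2
  have := cyclicCeilDist_lt hB (y + c)
  omega

/- A point `y + c + i` of `B` would be `⌈x + c⌉` for some `x = y + k ∈ B` with `k > i`, as `B` has
no point strictly between `y` and `⌈y + 1⌉`. The upward walk from `x + c` to `y + c + i` then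
passes through `y + c`, so `⌈x + c⌉ = ⌈y + c⌉`, against injectivity. -/
theorem add_notMem_of_cyclicCeilDist_lt {i : ℕ} (hei : cyclicCeilDist hB (y + c) < i)
    (hi : i ≤ cyclicCeilDist hB (y + 1)) : y + c + i ∉ B := by
  intro hb
  obtain ⟨x, hx, hρx⟩ :=
    Finset.surjOn_of_injOn_of_card_le _ (fun _ _ => cyclicCeil_mem hB _) hinj le_rfl hb
  simp only at hρx
  set k := (x - y).val
  have hxk : x = y + k := by
    rw [ZMod.natCast_zmod_val]
    ring
  have hip : i < p := hi.trans_lt (cyclicCeilDist_lt hB _)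
  have hk0 : k ≠ 0 := by
    intro h0
    rw [hxk, h0, Nat.cast_zero, add_zero, cyclicCeil] at hρx
    have := ZMod.natCast_inj_of_lt (cyclicCeilDist_lt hB _) hip (add_left_cancel hρx)
    omega
  have hik : i < k := by
    by_contra! h
    exact add_notMem_of_le_cyclicCeilDist_add_one hB (by omega) (by omega) (hxk ▸ hx)
  have hkp : k < p := ZMod.val_lt _
  have hwrap : p - k ≤ cyclicCeilDist hB (x + c) := by
    by_contra! h
    have : ((k + cyclicCeilDist hB (x + c) : ℕ) : ZMod p) = i := by
      refine add_left_cancel (a := y + c) ?_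
      rw [← hρx, cyclicCeil, hxk]
      push_cast
      ring
    have := ZMod.natCast_inj_of_lt (by omega) hip this
    omega
  have hρ : cyclicCeil hB (y + c) = cyclicCeil hB (x + c) := by
    rw [← cyclicCeil_add_of_le hB hwrap, hxk, Nat.cast_sub hkp.le, ZMod.natCast_self]
    ring_nf
  exact hk0 (by simp [k, hinj hy hx hρ])

theorem cyclicCeil_add_comm :
    cyclicCeil hB (cyclicCeil hB (y + c) + 1) = cyclicCeil hB (cyclicCeil hB (y + 1) + c) := by
  set e := cyclicCeilDist hB (y + c) with he
  have hle := cyclicCeilDist_add_le_cyclicCeilDist_add_one hB hinj hy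
  have hstep : cyclicCeilDist hB (y + 1) - e ≤ cyclicCeilDist hB (y + c + (e + 1 : ℕ)) :=
    (le_cyclicCeilDist_iff hB).mpr fun j hj => by
      rw [add_assoc, ← Nat.cast_add]
      exact add_notMem_of_cyclicCeilDist_lt hB hinj hy (by omega) (by omega)
  calc cyclicCeil hB (cyclicCeil hB (y + c) + 1)
      = cyclicCeil hB (y + c + (e + 1 : ℕ)) := by
        congr 1
        rw [cyclicCeil, ← he]
        push_cast
        ring
    _ = cyclicCeil hB (y + c + (e + 1 : ℕ) + (cyclicCeilDist hB (y + 1) - e : ℕ)) :=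
        (cyclicCeil_add_of_le hB hstep).symm
    _ = cyclicCeil hB (cyclicCeil hB (y + 1) + c) := by
        rw [cyclicCeil_add_one, add_assoc, ← Nat.cast_add,
          show e + 1 + (cyclicCeilDist hB (y + 1) - e) = cyclicCeilDist hB (y + 1) + 1 by omega,
          add_right_comm]

end Commute

end CyclicCeil

def Equiv.Perm.steps {α : Type*} [AddGroup α] [Fintype α] [DecidableEq α] (C : Equiv.Perm α)
    (v : α) : Finset α :=
  C.support.filter fun j => C j - j = v

namespace Equiv.Perm

variable {α : Type*} [Fintype α] [DecidableEq α]

theorem mem_steps_of_ne_zero [AddCommGroup α] {C : Perm α} {v : α} (hv : v ≠ 0) {j : α} :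
    j ∈ C.steps v ↔ C j = j + v := by
  rw [steps, mem_filter, mem_support, sub_eq_iff_eq_add']
  exact ⟨And.right, fun h => ⟨fun h' => hv (by simpa [h'] using h), h⟩⟩

theorem steps_eq_filter_sameCycle [AddGroup α] {σ C : Perm α} (hC : C ∈ σ.cycleFactorsFinset)
    {z : α} (hz : z ∈ C.support) (v : α) : C.steps v = (σ.steps v).filter (σ.SameCycle z) := by
  have hzσ : z ∈ σ.support := mem_cycleFactorsFinset_support_le hC hz
  rw [cycle_is_cycleOf hz hC]
  ext y
  simp only [steps, mem_filter, mem_support_cycleOf_iff]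
  constructor
  · rintro ⟨⟨hzy, -⟩, hy⟩
    exact ⟨⟨hzy.mem_support_iff.mp hzσ, by rwa [hzy.cycleOf_apply] at hy⟩, hzy⟩
  · rintro ⟨⟨-, hy⟩, hzy⟩
    exact ⟨⟨hzy, hzσ⟩, by rwa [hzy.cycleOf_apply]⟩

theorem natCast_card_steps_one_add_mul_eq_zero [Ring α] (C : Perm α) {c : α} (hc : c ≠ 1)
    (h : ∀ j ∈ C.support, C j - j = 1 ∨ C j - j = c) :
    (#(C.steps 1) : α) + #(C.steps c) * c = 0 := by
  have hsum : ∑ j ∈ C.support, (C j - j) = 0 := by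
    rw [sum_sub_distrib, sub_eq_zero]
    exact C.sum_comp _ (fun x => x) fun a ha => mem_support.mpr ha
  have hnot : C.support.filter (fun j => ¬ C j - j = 1) = C.steps c :=
    filter_congr fun j hj => ⟨(h j hj).resolve_left, fun hjc hj1 => hc (hjc ▸ hj1)⟩
  have hconst (v : α) : ∑ j ∈ C.steps v, (C j - j) = #(C.steps v) • v := by
    rw [← sum_const]
    exact sum_congr rfl fun j hj => (mem_filter.mp hj).2
  rw [← sum_filter_add_sum_filter_not C.support (fun j => C j - j = 1), hnot] at hsum
  rw [← nsmul_eq_mul, ← hconst, ← Nat.smul_one_eq_cast, ← hconst]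
  exact hsum

theorem steps_nonempty {p : ℕ} [NeZero p] {C : Perm (ZMod p)} {c : ZMod p} (hc : c ≠ 1)
    (h : ∀ j ∈ C.support, C j - j = 1 ∨ C j - j = c) (hC : C ≠ 1) (hlt : #C.support < p) :
    (C.steps c).Nonempty := by
  by_contra hne
  rw [not_nonempty_iff_eq_empty] at hne
  have h1 : C.steps 1 = C.support := filter_true_of_mem fun j hj =>
    (h j hj).resolve_right fun hjc => eq_empty_iff_forall_notMem.mp hne j (mem_filter.mpr ⟨hj, hjc⟩)
  have := C.natCast_card_steps_one_add_mul_eq_zero hc h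
  rw [hne, h1, card_empty, Nat.cast_zero, zero_mul, add_zero, ZMod.natCast_eq_zero_iff] at this
  exact hC (support_eq_empty_iff.mp (card_eq_zero.mp (Nat.eq_zero_of_dvd_of_lt this hlt)))

theorem sub_eq_or_sub_eq_of_mem_cycleFactorsFinset [AddGroup α] {σ C : Perm α} {a b : α}
    (hσ : ∀ j, σ j = j ∨ σ j - j = a ∨ σ j - j = b) (hC : C ∈ σ.cycleFactorsFinset) :
    ∀ j ∈ C.support, C j - j = a ∨ C j - j = b := fun j hj => by
  have hCj := (mem_cycleFactorsFinset_iff.mp hC).2 j hj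
  rw [hCj]
  exact (hσ j).resolve_left (hCj ▸ mem_support.mp hj)

theorem card_support_lt_of_mem_cycleFactorsFinset {σ C D : Perm α}
    (hC : C ∈ σ.cycleFactorsFinset) (hD : D ∈ σ.cycleFactorsFinset) (hCD : C ≠ D) :
    #C.support < Fintype.card α := by
  have hunion := card_le_univ (C.support ∪ D.support)
  rw [card_union_of_disjoint
    (σ.cycleFactorsFinset_pairwise_disjoint hC hD hCD).disjoint_support] at hunion
  have := (mem_cycleFactorsFinset_iff.mp hD).1.two_le_card_support
  omega

end Equiv.Perm

section Displacements

variable {p : ℕ} [NeZero p] {σ : Equiv.Perm (ZMod p)} {c : ZMod p}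

theorem iterate_succ_eq_add_of_le_cyclicCeilDist (hc : c ≠ 0)
    (hσ : ∀ j, σ j = j ∨ σ j - j = 1 ∨ σ j - j = c) (hB : (σ.steps c).Nonempty) {y : ZMod p}
    (hy : σ y = y + c) {i : ℕ} (hi : i ≤ cyclicCeilDist hB (y + c)) :
    σ^[i + 1] y = y + c + i := by
  induction i with
  | zero => simp [hy]
  | succ i ih =>
    have hprev := ih (by omega)
    have hnB : y + c + i ∉ σ.steps c := add_notMem_of_lt_cyclicCeilDist hB (by omega)
    have hmoved : σ (y + c + i) ≠ y + c + i := by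
      rw [← hprev]
      intro hfix
      have : σ y = y := σ.injective.iterate (i + 1) <| by
        rw [← iterate_succ_apply, iterate_succ_apply']
        exact hfix
      exact hc (by simpa [hy] using this)
    rw [iterate_succ_apply', hprev]
    rcases hσ (y + c + i) with h | h | h
    · exact absurd h hmoved
    · rw [sub_eq_iff_eq_add'] at h
      rw [h]
      push_cast
      ring
    · rw [sub_eq_iff_eq_add'] at h
      exact absurd ((Equiv.Perm.mem_steps_of_ne_zero hc).mpr h) hnB

theorem isFirstReturn_steps (hc : c ≠ 0) (hσ : ∀ j, σ j = j ∨ σ j - j = 1 ∨ σ j - j = c)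
    (hB : (σ.steps c).Nonempty) :
    IsFirstReturn σ (fun y => cyclicCeil hB (y + c)) (σ.steps c) := by
  intro y hy
  rw [mem_coe, Equiv.Perm.mem_steps_of_ne_zero hc] at hy
  refine ⟨cyclicCeilDist hB (y + c) + 1, by omega,
    iterate_succ_eq_add_of_le_cyclicCeilDist hc hσ hB hy le_rfl, cyclicCeil_mem hB _,
    fun i hi0 hi => ?_⟩
  obtain ⟨k, rfl⟩ : ∃ k, i = k + 1 := ⟨i - 1, by omega⟩
  rw [iterate_succ_eq_add_of_le_cyclicCeilDist hc hσ hB hy (by omega)]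
  exact add_notMem_of_lt_cyclicCeilDist hB (by omega)

theorem card_steps_filter_sameCycle_eq (hc : c ≠ 0)
    (hσ : ∀ j, σ j = j ∨ σ j - j = 1 ∨ σ j - j = c) {a b : ZMod p} (ha : a ∈ σ.steps c)
    (hb : b ∈ σ.steps c) :
    #((σ.steps c).filter (σ.SameCycle a)) = #((σ.steps c).filter (σ.SameCycle b)) := by
  have hB : (σ.steps c).Nonempty := ⟨a, ha⟩
  have hρ := isFirstReturn_steps hc hσ hB
  have hN := isFirstReturn_add_one hB
  refine card_filter_sameCycle_eq hρ hN.mapsTo (hN.injOn (add_left_injective 1))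
    (fun x hx => cyclicCeil_add_comm hB (hρ.injOn σ.injective) hx) (fun x hx y hy => ?_) ha hb
  exact hN.exists_iterate_eq_of_iterate_eq hx hy (k := (y - x).val) (by simp)

theorem card_steps_eq_of_mem_cycleFactorsFinset (hc : c ≠ 0)
    (hσ : ∀ j, σ j = j ∨ σ j - j = 1 ∨ σ j - j = c) {C₁ C₂ : Equiv.Perm (ZMod p)}
    (hC₁ : C₁ ∈ σ.cycleFactorsFinset) (hC₂ : C₂ ∈ σ.cycleFactorsFinset)
    (h₁ : (C₁.steps c).Nonempty) (h₂ : (C₂.steps c).Nonempty) :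
    #(C₁.steps c) = #(C₂.steps c) := by
  obtain ⟨z₁, hz₁⟩ := h₁
  obtain ⟨z₂, hz₂⟩ := h₂
  have e₁ := Equiv.Perm.steps_eq_filter_sameCycle hC₁ (mem_filter.mp hz₁).1 c
  have e₂ := Equiv.Perm.steps_eq_filter_sameCycle hC₂ (mem_filter.mp hz₂).1 c
  rw [e₁] at hz₁ ⊢
  rw [e₂] at hz₂ ⊢
  exact card_steps_filter_sameCycle_eq hc hσ (mem_filter.mp hz₁).1 (mem_filter.mp hz₂).1

end Displacements

theorem apply_eq_or_sub_eq_of_mem_Tset {p q r s : ℕ} [NeZero p] (hq0 : (q : ZMod p) ≠ 0)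
    (hq1 : (q : ZMod p) ≠ 1) {σ : Equiv.Perm (ZMod p)} (hσ : σ ∈ Tset p q r s) (j : ZMod p) :
    σ j = j ∨ σ j - j = 1 ∨ σ j - j = q := by
  have h10 : (1 : ZMod p) ≠ 0 := fun h => hq0 (by rw [← mul_one (q : ZMod p), h, mul_zero])
  obtain ⟨hF, hA, hB⟩ := hσ
  by_contra! hj
  set F := univ.filter fun j : ZMod p => σ j = j
  set A := univ.filter fun j : ZMod p => σ j - j = 1
  set Bq := univ.filter fun j : ZMod p => σ j - j = (q : ZMod p)
  have hAB : Disjoint A Bq := disjoint_filter.mpr fun x _ h1 hq => hq1 (hq.symm.trans h1)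
  have hFAB : Disjoint F (A ∪ Bq) := disjoint_union_right.mpr
    ⟨disjoint_filter.mpr fun x _ h0 h1 => h10 (by rw [← h1, h0, sub_self]),
      disjoint_filter.mpr fun x _ h0 hq => hq0 (by rw [← hq, h0, sub_self])⟩
  have hsub : F ∪ (A ∪ Bq) ⊆ univ.erase j := fun x hx => mem_erase.mpr ⟨by
    rintro rfl
    simp only [F, A, Bq, mem_union, mem_filter, mem_univ, true_and] at hx
    tauto, mem_univ x⟩
  have := NeZero.pos p
  have h1 := card_le_card hsub
  have h2 := card_le_univ (A ∪ Bq)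
  rw [card_union_of_disjoint hFAB, card_union_of_disjoint hAB, hF, hA, hB,
    card_erase_of_mem (mem_univ _), card_univ, ZMod.card] at h1
  rw [card_union_of_disjoint hAB, hA, hB, ZMod.card] at h2
  omega

/-- Any two nontrivial cycles of a permutation in `T_{p,q}(r,s)` have the same number of
1-steps and the same number of q-steps. -/
theorem cycles_same_step_counts (p q r s : ℕ) [NeZero p] (hq : 1 < q) (hqp : q < p)
    (σ : Equiv.Perm (ZMod p)) (hσ : σ ∈ Tset p q r s)
    (C₁ C₂ : Equiv.Perm (ZMod p))
    (hC₁ : C₁ ∈ σ.cycleFactorsFinset) (hC₂ : C₂ ∈ σ.cycleFactorsFinset) :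
    (C₁.support.filter fun j => C₁ j - j = 1).card =
        (C₂.support.filter fun j => C₂ j - j = 1).card ∧
      (C₁.support.filter fun j => C₁ j - j = (q : ZMod p)).card =
        (C₂.support.filter fun j => C₂ j - j = (q : ZMod p)).card := by
  change #(C₁.steps 1) = #(C₂.steps 1) ∧ #(C₁.steps q) = #(C₂.steps q)
  by_cases hC : C₁ = C₂
  · subst hC
    exact ⟨rfl, rfl⟩
  have hq0 : (q : ZMod p) ≠ 0 := by
    simpa using mt (ZMod.natCast_inj_of_lt (b := 0) hqp (by omega)) (by omega)
  have hq1 : (q : ZMod p) ≠ 1 := by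
    simpa using mt (ZMod.natCast_inj_of_lt (b := 1) hqp (by omega)) (by omega)
  have hσ' := apply_eq_or_sub_eq_of_mem_Tset hq0 hq1 hσ
  have hsteps₁ := Equiv.Perm.sub_eq_or_sub_eq_of_mem_cycleFactorsFinset hσ' hC₁
  have hsteps₂ := Equiv.Perm.sub_eq_or_sub_eq_of_mem_cycleFactorsFinset hσ' hC₂
  have hlt₁ := ZMod.card p ▸ Equiv.Perm.card_support_lt_of_mem_cycleFactorsFinset hC₁ hC₂ hC
  have hlt₂ := ZMod.card p ▸ Equiv.Perm.card_support_lt_of_mem_cycleFactorsFinset hC₂ hC₁ (.symm hC)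
  have hne₁ := (Equiv.Perm.mem_cycleFactorsFinset_iff.mp hC₁).1.ne_one
  have hne₂ := (Equiv.Perm.mem_cycleFactorsFinset_iff.mp hC₂).1.ne_one
  have hs := card_steps_eq_of_mem_cycleFactorsFinset hq0 hσ' hC₁ hC₂
    (Equiv.Perm.steps_nonempty hq1 hsteps₁ hne₁ hlt₁)
    (Equiv.Perm.steps_nonempty hq1 hsteps₂ hne₂ hlt₂)
  refine ⟨ZMod.natCast_inj_of_lt ((card_filter_le _ _).trans_lt hlt₁)
    ((card_filter_le _ _).trans_lt hlt₂) ?_, hs⟩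
  have e₁ := C₁.natCast_card_steps_one_add_mul_eq_zero hq1 hsteps₁
  have e₂ := C₂.natCast_card_steps_one_add_mul_eq_zero hq1 hsteps₂
  rw [hs] at e₁
  exact add_right_cancel (e₁.trans e₂.symm)
end

section
/- Every σ ∈ T_{p,q}(r,s) with r + s > 0 has exactly k = gcd(r, s, (r+sq)/p) nontrivial cycles, each consisting of r/k 1-steps and s/k q-steps; in particular all elements of T_{p,q}(r,s) have the same cycle type, and sgn(σ) = (-1)^{r+s+gcd(r,s,(r+sq)/p)}. -/
/-!
Read `σ` as a family of arcs `[j, σ j)` on the circle `ZMod p`, of lengths `0`, `1` or `q`. For any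
permutation `τ`, the number of arcs containing `x` is the same for `x` and `x + 1` (an arc ends at
`x + 1` exactly when one starts there), so it is a constant `ℓ(τ)`, the winding number. Counting
incidences gives `p ℓ(τ) = ∑ j, (τ j - j).val`, hence `p ℓ(σ) = r + q s`, and `ℓ` is additive over
the cycles of `σ`.

For a cycle `C` of `σ` with `s_C` q-steps, count the pairs of a q-step `n` of `C` and a q-step `m`
of `σ` with `n ∈ [m, m + q)`. The point `n` is covered only by q-arcs of `σ`, `ℓ(σ)` of them, and
the q-steps of `C` starting in `[m, m + q)` are the arcs of `C` containing `m + q - 1`, `ℓ(C)` of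
them. So `s_C ℓ(σ) = s ℓ(C)`, whence `ℓ/k ∣ ℓ(C)` for `k = gcd(s, ℓ)`, and `∑ C, ℓ(C) = ℓ` leaves
room for at most `k` cycles, with equality only if `ℓ(C) = ℓ/k` for every `C`.

Conversely, the number of q-steps below `x` is invariant modulo `k` along `σ`: a 1-step passes no
start of a q-step, a q-step from `x` passes `ℓ` of them (those whose arcs contain `x + q - 1`), and
wrapping around the circle costs `s`. On the q-steps themselves it takes all values `0, …, s - 1`,
so they lie in at least `k` different cycles.
-/

open Finset

lemma div_gcd_dvd_of_mul_eq {a c s l : ℕ} (hl : 0 < l) (h : a * l = s * c) :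
    l / Nat.gcd s l ∣ c := by
  have hg := Nat.gcd_pos_of_pos_right s hl
  have hcop := Nat.coprime_div_gcd_div_gcd (m := s) hg
  refine hcop.symm.dvd_of_dvd_mul_left ⟨a, Nat.eq_of_mul_eq_mul_left hg ?_⟩
  rw [← mul_assoc, ← mul_assoc, Nat.mul_div_cancel' (Nat.gcd_dvd_left s l),
    Nat.mul_div_cancel' (Nat.gcd_dvd_right s l), ← h, mul_comm]

lemma eq_div_of_mul_eq_mul_div {a b k l : ℕ} (hk : k ∣ l) (hl : 0 < l) (h : a * l = b * (l / k)) :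
    a = b / k := by
  have hlk : 0 < l / k := Nat.div_pos (Nat.le_of_dvd hl hk) (Nat.pos_of_dvd_of_pos hk hl)
  refine (Nat.div_eq_of_eq_mul_left (Nat.pos_of_dvd_of_pos hk hl) ?_).symm
  refine Nat.eq_of_mul_eq_mul_right hlk ?_
  rw [← h, mul_assoc, Nat.mul_div_cancel' hk]

lemma gcd_gcd_div_eq {p q r s l : ℕ} (hp : 0 < p) (h : p * l = r + q * s) :
    Nat.gcd (Nat.gcd r s) ((r + s * q) / p) = Nat.gcd s l := by
  have hdiv : (r + s * q) / p = l := by rw [mul_comm s q, ← h, Nat.mul_div_cancel_left _ hp]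
  have hr : Nat.gcd s l ∣ r := (Nat.dvd_add_left (dvd_mul_of_dvd_right (Nat.gcd_dvd_left s l) q)).mp
    (h ▸ dvd_mul_of_dvd_right (Nat.gcd_dvd_right s l) p)
  rw [hdiv, Nat.gcd_assoc, Nat.gcd_eq_right hr]

lemma Finset.card_eq_and_forall_eq_of_sum_eq_mul {ι : Type*} {S : Finset ι} {f : ι → ℕ} {k c : ℕ}
    (hc : 0 < c) (hf : ∀ i ∈ S, c ≤ f i) (hsum : ∑ i ∈ S, f i = k * c) (hk : k ≤ #S) :
    #S = k ∧ ∀ i ∈ S, f i = c := by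
  have hS : #S * c ≤ k * c := by
    rw [← hsum, ← smul_eq_mul]
    exact card_nsmul_le_sum S f c hf
  have hcard : #S = k := le_antisymm (Nat.le_of_mul_le_mul_right hS hc) hk
  refine ⟨hcard, fun i hi => ((sum_eq_sum_iff_of_le hf).mp ?_ i hi).symm⟩
  rw [sum_const, smul_eq_mul, hcard, hsum]

namespace Equiv.Perm

section Cycles

variable {α : Type*}

lemma SameCycle.eq_of_forall_apply_eq {β : Type*} [Finite α] {σ : Perm α} {f : α → β}
    (hf : ∀ x, f (σ x) = f x) {x y : α} (h : σ.SameCycle x y) : f x = f y := by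
  obtain ⟨i, rfl⟩ := h.exists_nat_pow_eq
  induction i with
  | zero => rfl
  | succ i ih => rw [pow_succ', mul_apply, hf, ih (sameCycle_pow_right.mpr (SameCycle.refl σ x))]

variable [Fintype α] [DecidableEq α]

lemma apply_eq_of_mem_cycleFactorsFinset {σ C : Perm α} (hC : C ∈ σ.cycleFactorsFinset) {x : α}
    (hx : C x ≠ x) : C x = σ x :=
  (mem_cycleFactorsFinset_iff.mp hC).2 x (mem_support.mpr hx)

lemma sum_cycleFactorsFinset_apply {M : Type*} [AddCommMonoid M]
    (σ : Perm α) (F : α → α → M) (hF : ∀ x, F x x = 0) (x : α) :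
    ∑ C ∈ σ.cycleFactorsFinset, F (C x) x = F (σ x) x := by
  by_cases hx : σ x = x
  · rw [hx, hF]
    refine sum_eq_zero fun C hC => ?_
    have hxC : x ∉ C.support := fun h => mem_support.mp (mem_cycleFactorsFinset_support_le hC h) hx
    rw [notMem_support.mp hxC, hF]
  · rw [sum_eq_single (σ.cycleOf x), cycleOf_apply_self]
    · intro C hC hne
      by_contra hCx
      exact hne (cycle_is_cycleOf (mem_support.mpr fun h => hCx (by rw [h, hF])) hC)
    · intro h
      exact absurd (cycleOf_mem_cycleFactorsFinset_iff.mpr (mem_support.mpr hx)) h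

lemma sign_eq_neg_one_pow (σ : Perm α) :
    sign σ = (-1) ^ (#σ.support + #σ.cycleFactorsFinset) := by
  rw [sign_of_cycleType, sum_cycleType, cycleType_def, Multiset.card_map]
  rfl

end Cycles

end Equiv.Perm

section ZModArith

variable {p : ℕ}

lemma natCast_ne_zero_of_lt {q : ℕ} (h0 : 0 < q) (hqp : q < p) : (q : ZMod p) ≠ 0 := by
  rw [Ne, ZMod.natCast_eq_zero_iff]
  exact Nat.not_dvd_of_pos_of_lt h0 hqp

lemma one_ne_natCast {q : ℕ} (hq : 1 < q) (hqp : q < p) : (1 : ZMod p) ≠ q := by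
  rw [← Nat.cast_one, Ne, ZMod.natCast_eq_natCast_iff', Nat.mod_eq_of_lt (hq.trans hqp),
    Nat.mod_eq_of_lt hqp]
  exact hq.ne

lemma apply_add_sub_one_sub_ne_one {q : ℕ} (hq : 1 < q) (hqp : q < p) {τ : Equiv.Perm (ZMod p)}
    {m : ZMod p} (hm : τ m - m = q) : τ (m + q - 1) - (m + q - 1) ≠ 1 := by
  intro h
  have hτm : τ (m + q - 1) = τ m := by linear_combination h - hm
  exact one_ne_natCast hq hqp (by linear_combination -τ.injective hτm)

variable [NeZero p]

lemma val_add_one_of_ne_zero {u : ZMod p} (h : u + 1 ≠ 0) : (u + 1).val = u.val + 1 := by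
  have hcast : ((u.val + 1 : ℕ) : ZMod p) = u + 1 := by push_cast [ZMod.natCast_zmod_val]; rfl
  have hlt : u.val + 1 < p := by
    refine lt_of_le_of_ne (ZMod.val_lt u) fun hp => h ?_
    rw [← hcast, hp, ZMod.natCast_self]
  rw [← hcast, ZMod.val_cast_of_lt hlt]

lemma val_add_one_of_eq_zero {u : ZMod p} (h : u + 1 = 0) : u.val + 1 = p := by
  have hdvd : p ∣ u.val + 1 := by
    rw [← ZMod.natCast_eq_zero_iff]; push_cast [ZMod.natCast_zmod_val]; exact h
  exact le_antisymm (ZMod.val_lt u) (Nat.le_of_dvd u.val.succ_pos hdvd)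

lemma val_sub_eq_ite (a b : ZMod p) :
    (a - b).val = if b.val ≤ a.val then a.val - b.val else a.val + p - b.val := by
  split_ifs with h
  · exact ZMod.val_sub h
  · have hba : b - a ≠ 0 := fun h0 => by
      rw [sub_eq_zero.mp h0] at h; exact h le_rfl
    rw [← neg_sub, ZMod.neg_val, if_neg hba, ZMod.val_sub (by omega)]
    have := ZMod.val_lt b
    omega

lemma card_filter_val_sub_lt (m : ZMod p) {d : ℕ} (hd : d ≤ p) :
    #{x : ZMod p | (x - m).val < d} = d := by
  rw [← card_range d]
  refine card_nbij' (fun x => (x - m).val) (fun i => (i : ZMod p) + m) ?_ ?_ ?_ ?_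
  · intro x hx; simpa using hx
  · intro i hi
    simp only [coe_range, Set.mem_Iio] at hi
    simpa [ZMod.val_cast_of_lt (hi.trans_le hd)] using hi
  · intro x _; simp
  · intro i hi
    simp only [coe_range, Set.mem_Iio] at hi
    simp [ZMod.val_cast_of_lt (hi.trans_le hd)]

lemma val_natCast_sub_one_sub_lt_iff {q : ℕ} (hq : 0 < q) (hqp : q ≤ p) (z : ZMod p) :
    ((q : ZMod p) - 1 - z).val < q ↔ z.val < q := by
  have hq1 : ((q : ZMod p) - 1).val = q - 1 := by
    rw [← Nat.cast_pred hq, ZMod.val_cast_of_lt (by omega)]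
  rw [val_sub_eq_ite, hq1]
  have := ZMod.val_lt z
  split_ifs <;> omega

lemma ite_val_add_one_lt (u v : ZMod p) :
    (if (u + 1).val < v.val then 1 else 0) + (if v = u + 1 ∧ v ≠ 0 then 1 else 0) =
      (if u.val < v.val then 1 else 0) + (if u + 1 = 0 ∧ v ≠ 0 then 1 else 0) := by
  have hv := ZMod.val_lt v
  simp only [← ZMod.val_pos]
  by_cases h : u + 1 = 0
  · have hu := val_add_one_of_eq_zero h
    simp only [h, ← (ZMod.val_injective p).eq_iff, ZMod.val_zero, true_and]
    split_ifs <;> omega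
  · simp only [← (ZMod.val_injective p).eq_iff, val_add_one_of_ne_zero h, ZMod.val_zero,
      Nat.add_one_ne_zero, false_and, if_false, add_zero]
    split_ifs <;> omega

end ZModArith

section ValRank

variable {p : ℕ}

def valRank (B : Finset (ZMod p)) (x : ZMod p) : ℕ := #{m ∈ B | m.val < x.val}

lemma valRank_lt_valRank {B : Finset (ZMod p)} {a b : ZMod p} (ha : a ∈ B) (hab : a.val < b.val) :
    valRank B a < valRank B b := by
  refine card_lt_card ⟨fun m hm => ?_, fun hsub => ?_⟩
  · simp only [mem_filter] at hm ⊢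
    exact ⟨hm.1, hm.2.trans hab⟩
  · exact (lt_irrefl a.val) (mem_filter.mp (hsub (mem_filter.mpr ⟨ha, hab⟩))).2

lemma valRank_lt_card {B : Finset (ZMod p)} {a : ZMod p} (ha : a ∈ B) : valRank B a < #B :=
  card_lt_card (filter_ssubset.mpr ⟨a, ha, lt_irrefl _⟩)

variable [NeZero p]

lemma valRank_add_ite (B : Finset (ZMod p)) (x y : ZMod p) :
    valRank B y + (if y.val < x.val then #B else 0) =
      valRank B x + #{m ∈ B | (m - x).val < (y - x).val} := by
  have key : ∀ m ∈ B, (if m.val < y.val then 1 else 0) + (if y.val < x.val then 1 else 0) =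
      (if m.val < x.val then 1 else 0) + (if (m - x).val < (y - x).val then 1 else 0) := by
    intro m _
    have := ZMod.val_lt m
    have := ZMod.val_lt x
    have := ZMod.val_lt y
    rw [val_sub_eq_ite m x, val_sub_eq_ite y x]
    split_ifs <;> omega
  have hsum := sum_congr rfl key
  rw [sum_add_distrib, sum_add_distrib, sum_const, smul_eq_mul, mul_ite, mul_one, mul_zero]
    at hsum
  simpa only [valRank, card_filter] using hsum

lemma valRank_surjOn (B : Finset (ZMod p)) : Set.SurjOn (valRank B) B (range #B) := by
  refine surjOn_of_injOn_of_card_le _ (fun a ha => mem_range.mpr (valRank_lt_card ha)) ?_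
    (card_range _).le
  intro a ha b hb hab
  rcases lt_trichotomy a.val b.val with h | h | h
  · exact absurd hab (valRank_lt_valRank ha h).ne
  · exact ZMod.val_injective p h
  · exact absurd hab (valRank_lt_valRank hb h).ne'

end ValRank

namespace Equiv.Perm

variable {p : ℕ} [NeZero p]

/-- The number of arcs `[m, τ m)` of `τ` that contain `x`. -/
def arcCover (τ : Perm (ZMod p)) (x : ZMod p) : ℕ :=
  #{m | (x - m).val < (τ m - m).val}

def winding (τ : Perm (ZMod p)) : ℕ := τ.arcCover 0

lemma arcCover_add_one (τ : Perm (ZMod p)) (x : ZMod p) :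
    τ.arcCover (x + 1) = τ.arcCover x := by
  have key : τ.arcCover (x + 1) + #{m | τ m = x + 1 ∧ τ m ≠ m} =
      τ.arcCover x + #{m | x + 1 = m ∧ τ m ≠ m} := by
    simp only [arcCover, card_filter, ← sum_add_distrib]
    refine sum_congr rfl fun m _ => ?_
    have h := ite_val_add_one_lt (x - m) (τ m - m)
    simp only [sub_add_eq_add_sub, sub_left_inj, sub_ne_zero, sub_eq_zero] at h
    exact h
  have hmove : #{m | τ m = x + 1 ∧ τ m ≠ m} = #{m | x + 1 = m ∧ τ m ≠ m} :=
    card_equiv τ fun m => by simp [eq_comm]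
  omega

lemma arcCover_eq_winding (τ : Perm (ZMod p)) (x : ZMod p) : τ.arcCover x = τ.winding := by
  rw [← ZMod.natCast_zmod_val x]
  induction x.val with
  | zero => rw [Nat.cast_zero, winding]
  | succ n ih => rw [Nat.cast_succ, arcCover_add_one, ih]

lemma mul_winding (τ : Perm (ZMod p)) : p * τ.winding = ∑ m, (τ m - m).val := by
  calc p * τ.winding = ∑ x, τ.arcCover x := by
        simp [arcCover_eq_winding, ZMod.card]
    _ = ∑ m, #{x : ZMod p | (x - m).val < (τ m - m).val} :=
        sum_card_bipartiteAbove_eq_sum_card_bipartiteBelow _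
    _ = ∑ m, (τ m - m).val :=
        sum_congr rfl fun m _ => card_filter_val_sub_lt m (ZMod.val_lt _).le

lemma winding_pos {τ : Perm (ZMod p)} (hτ : τ ≠ 1) : 0 < τ.winding := by
  obtain ⟨m, hm⟩ : ∃ m, τ m ≠ m := by
    by_contra! h
    exact hτ (Equiv.ext h)
  have hpos : 0 < ∑ m, (τ m - m).val :=
    (ZMod.val_pos.mpr (sub_ne_zero.mpr hm)).trans_le
      (single_le_sum (f := fun m => (τ m - m).val) (fun _ _ => Nat.zero_le _) (mem_univ m))
  rw [← mul_winding] at hpos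
  exact pos_of_mul_pos_right hpos (Nat.zero_le p)

@[simp]
lemma winding_one : (1 : Perm (ZMod p)).winding = 0 := by
  simp [winding, arcCover]

lemma sum_winding_cycleFactorsFinset (σ : Perm (ZMod p)) :
    ∑ C ∈ σ.cycleFactorsFinset, C.winding = σ.winding := by
  refine Nat.eq_of_mul_eq_mul_left (NeZero.pos p) ?_
  rw [mul_sum]
  simp only [mul_winding]
  rw [sum_comm]
  exact sum_congr rfl fun x _ => sum_cycleFactorsFinset_apply σ (fun y x => (y - x).val) (by simp) x

def stepSet (τ : Perm (ZMod p)) (d : ZMod p) : Finset (ZMod p) := {j | τ j - j = d}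

@[simp]
lemma mem_stepSet {τ : Perm (ZMod p)} {d j : ZMod p} : j ∈ τ.stepSet d ↔ τ j - j = d := by
  simp [stepSet]

def HasOneQSteps (τ : Perm (ZMod p)) (q : ℕ) : Prop :=
  ∀ x, τ x = x ∨ τ x - x = 1 ∨ τ x - x = q

lemma filter_support_eq_stepSet (τ : Perm (ZMod p))
    {d : ZMod p} (hd : d ≠ 0) : τ.support.filter (fun j => τ j - j = d) = τ.stepSet d := by
  ext j
  simp only [mem_filter, mem_support, mem_stepSet, and_iff_right_iff_imp]
  intro h h'
  rw [h', sub_self] at h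
  exact hd h.symm

namespace HasOneQSteps

variable {q : ℕ} {τ σ C : Perm (ZMod p)}

lemma mul_winding (hτ : τ.HasOneQSteps q) (hq : 1 < q) (hqp : q < p) :
    p * τ.winding = #(τ.stepSet 1) + q * #(τ.stepSet q) := by
  have : Fact (1 < p) := ⟨hq.trans hqp⟩
  have h1q := one_ne_natCast hq hqp
  have h0q := natCast_ne_zero_of_lt (zero_lt_one.trans hq) hqp
  rw [Perm.mul_winding, stepSet, stepSet, card_filter, card_filter, mul_sum, ← sum_add_distrib]
  refine sum_congr rfl fun m _ => ?_
  rcases hτ m with h | h | h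
  · simp [h, h0q.symm]
  · simp [h, h1q, ZMod.val_one]
  · simp [h, h1q.symm, ZMod.val_cast_of_lt hqp]

lemma card_filter_stepSet_eq_winding (hτ : τ.HasOneQSteps q) (hq : 1 < q) (hqp : q < p)
    {x : ZMod p} (hx : τ x - x ≠ 1) : #{m ∈ τ.stepSet q | (x - m).val < q} = τ.winding := by
  have : Fact (1 < p) := ⟨hq.trans hqp⟩
  rw [← arcCover_eq_winding τ x, arcCover, stepSet, filter_filter]
  refine congrArg card (filter_congr fun m _ => ?_)
  rcases hτ m with h | h | h
  · simp [h, (natCast_ne_zero_of_lt (zero_lt_one.trans hq) hqp).symm]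
  · rw [h, ZMod.val_one, Nat.lt_one_iff, ZMod.val_eq_zero, sub_eq_zero]
    constructor
    · exact fun h' => absurd h'.1 (one_ne_natCast hq hqp)
    · rintro rfl
      exact absurd h hx
  · rw [h, ZMod.val_cast_of_lt hqp, and_iff_right rfl]

lemma card_filter_stepSet_window_eq_winding (hτ : τ.HasOneQSteps q) (hq : 1 < q) (hqp : q < p)
    {m : ZMod p} (hm : τ (m + q - 1) - (m + q - 1) ≠ 1) :
    #{n ∈ τ.stepSet q | (n - m).val < q} = τ.winding := by
  rw [← hτ.card_filter_stepSet_eq_winding hq hqp hm]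
  refine congrArg card (filter_congr fun n _ => ?_)
  rw [show m + q - 1 - n = q - 1 - (n - m) by ring,
    val_natCast_sub_one_sub_lt_iff (zero_lt_one.trans hq) hqp.le]

lemma of_mem_cycleFactorsFinset (hσ : σ.HasOneQSteps q)
    (hC : C ∈ σ.cycleFactorsFinset) : C.HasOneQSteps q := by
  intro x
  by_cases hx : C x = x
  · exact Or.inl hx
  · rw [apply_eq_of_mem_cycleFactorsFinset hC hx]
    exact hσ x

lemma card_stepSet_mul_winding (hσ : σ.HasOneQSteps q) (hq : 1 < q)
    (hqp : q < p) (hC : C ∈ σ.cycleFactorsFinset) :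
    #(C.stepSet q) * σ.winding = #(σ.stepSet q) * C.winding := by
  have : Fact (1 < p) := ⟨hq.trans hqp⟩
  have h1q := one_ne_natCast hq hqp
  have hq0 := natCast_ne_zero_of_lt (zero_lt_one.trans hq) hqp
  have hCq := hσ.of_mem_cycleFactorsFinset hC
  have hstep : ∀ n ∈ C.stepSet q, σ n - n = q := by
    intro n hn
    rw [mem_stepSet] at hn
    have hne : C n ≠ n := fun h => hq0 (by rw [← hn, h, sub_self])
    rwa [← apply_eq_of_mem_cycleFactorsFinset hC hne]
  have hwindow : ∀ m ∈ σ.stepSet q, C (m + q - 1) - (m + q - 1) ≠ 1 := by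
    intro m hm h
    have hne : C (m + q - 1) ≠ m + q - 1 := fun h' => by
      rw [h', sub_self] at h
      exact one_ne_zero h.symm
    rw [apply_eq_of_mem_cycleFactorsFinset hC hne] at h
    exact apply_add_sub_one_sub_ne_one hq hqp (mem_stepSet.mp hm) h
  calc #(C.stepSet q) * σ.winding
      = ∑ n ∈ C.stepSet q, #{m ∈ σ.stepSet q | (n - m).val < q} := by
        rw [sum_congr rfl fun n hn => hσ.card_filter_stepSet_eq_winding hq hqp
          (hstep n hn ▸ h1q.symm), sum_const, smul_eq_mul]
    _ = ∑ m ∈ σ.stepSet q, #{n ∈ C.stepSet q | (n - m).val < q} :=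
        sum_card_bipartiteAbove_eq_sum_card_bipartiteBelow _
    _ = #(σ.stepSet q) * C.winding := by
        rw [sum_congr rfl fun m hm => hCq.card_filter_stepSet_window_eq_winding hq hqp
          (hwindow m hm), sum_const, smul_eq_mul]

lemma card_stepSet_one_mul_winding (hσ : σ.HasOneQSteps q) (hq : 1 < q)
    (hqp : q < p) (hC : C ∈ σ.cycleFactorsFinset) :
    #(C.stepSet 1) * σ.winding = #(σ.stepSet 1) * C.winding := by
  have hCσ := hσ.card_stepSet_mul_winding hq hqp hC
  have hpC := (hσ.of_mem_cycleFactorsFinset hC).mul_winding hq hqp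
  have hpσ := hσ.mul_winding hq hqp
  have key : #(C.stepSet 1) * σ.winding + q * (#(C.stepSet q) * σ.winding) =
      #(σ.stepSet 1) * C.winding + q * (#(σ.stepSet q) * C.winding) := by
    calc _ = p * C.winding * σ.winding := by rw [hpC]; ring
      _ = p * σ.winding * C.winding := by ring
      _ = _ := by rw [hpσ]; ring
  rw [hCσ] at key
  exact Nat.add_right_cancel key

lemma valRank_apply_modEq (hσ : σ.HasOneQSteps q) (hq : 1 < q) (hqp : q < p)
    {k : ℕ} (hks : k ∣ #(σ.stepSet q)) (hkw : k ∣ σ.winding) (x : ZMod p) :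
    valRank (σ.stepSet q) (σ x) ≡ valRank (σ.stepSet q) x [MOD k] := by
  have : Fact (1 < p) := ⟨hq.trans hqp⟩
  have hite : k ∣ if (σ x).val < x.val then #(σ.stepSet q) else 0 := by
    split_ifs
    exacts [hks, dvd_zero k]
  have hwin : k ∣ #{m ∈ σ.stepSet q | (m - x).val < (σ x - x).val} := by
    rcases hσ x with h | h | h
    · simp [h]
    · rw [card_eq_zero.mpr (filter_eq_empty_iff.mpr fun m hm => ?_)]
      · exact dvd_zero k
      rw [h, ZMod.val_one, Nat.lt_one_iff, ZMod.val_eq_zero, sub_eq_zero]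
      rintro rfl
      exact one_ne_natCast hq hqp (h.symm.trans (mem_stepSet.mp hm))
    · rwa [h, ZMod.val_cast_of_lt hqp,
        hσ.card_filter_stepSet_window_eq_winding hq hqp (apply_add_sub_one_sub_ne_one hq hqp h)]
  calc valRank (σ.stepSet q) (σ x)
      ≡ valRank (σ.stepSet q) (σ x) + if (σ x).val < x.val then #(σ.stepSet q) else 0 [MOD k] :=
        (Nat.modEq_zero_iff_dvd.mpr hite).symm.add_left _
    _ = valRank (σ.stepSet q) x + #{m ∈ σ.stepSet q | (m - x).val < (σ x - x).val} :=
        valRank_add_ite _ x (σ x)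
    _ ≡ valRank (σ.stepSet q) x + 0 [MOD k] := (Nat.modEq_zero_iff_dvd.mpr hwin).add_left _

lemma gcd_le_card_cycleFactorsFinset (hσ : σ.HasOneQSteps q) (hq : 1 < q)
    (hqp : q < p) (hσ1 : σ ≠ 1) :
    Nat.gcd #(σ.stepSet q) σ.winding ≤ #σ.cycleFactorsFinset := by
  set B := σ.stepSet q
  set k := Nat.gcd #B σ.winding
  rcases Nat.eq_zero_or_pos #B with hB | hB
  · have hw : p * σ.winding ≤ p * 1 := by
      rw [hσ.mul_winding hq hqp, hB, mul_zero, add_zero, mul_one]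
      exact (card_le_univ _).trans_eq (ZMod.card p)
    calc k = σ.winding := by simp only [k, hB, Nat.gcd_zero_left]
      _ ≤ 1 := Nat.le_of_mul_le_mul_left hw (NeZero.pos p)
      _ ≤ #σ.cycleFactorsFinset :=
        card_pos.mpr (nonempty_iff_ne_empty.mpr (mt cycleFactorsFinset_eq_empty_iff.mp hσ1))
  have hk : k ≤ #B := Nat.le_of_dvd hB (Nat.gcd_dvd_left _ _)
  have hsame : ∀ x y, σ.SameCycle x y → valRank B x ≡ valRank B y [MOD k] := fun x y h =>
    h.eq_of_forall_apply_eq (f := fun x => valRank B x % k) fun x =>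
      hσ.valRank_apply_modEq hq hqp (Nat.gcd_dvd_left _ _) (Nat.gcd_dvd_right _ _) x
  choose! b hbB hb using fun j (hj : j ∈ range k) =>
    valRank_surjOn B (mem_range.mpr ((mem_range.mp hj).trans_le hk))
  have hmoved : ∀ j ∈ range k, b j ∈ σ.support := fun j hj => mem_support.mpr fun h =>
    natCast_ne_zero_of_lt (zero_lt_one.trans hq) hqp
      (by rw [← mem_stepSet.mp (hbB j hj), h, sub_self])
  calc k = #(range k) := (card_range k).symm
    _ ≤ #σ.cycleFactorsFinset := by
      refine card_le_card_of_injOn (fun j => σ.cycleOf (b j))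
        (fun j hj => cycleOf_mem_cycleFactorsFinset_iff.mpr (hmoved j hj)) ?_
      intro i hi j hj (hij : σ.cycleOf (b i) = σ.cycleOf (b j))
      have hij' : σ.SameCycle (b i) (b j) := by
        have := mem_support_cycleOf_iff.mpr ⟨SameCycle.refl σ (b j), hmoved j hj⟩
        rw [← hij] at this
        exact (mem_support_cycleOf_iff.mp this).1
      have := hsame _ _ hij'
      rw [hb i hi, hb j hj] at this
      rwa [Nat.ModEq, Nat.mod_eq_of_lt (mem_range.mp hi), Nat.mod_eq_of_lt (mem_range.mp hj)]
        at this

lemma card_cycleFactorsFinset_eq_and_winding_eq (hσ : σ.HasOneQSteps q)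
    (hq : 1 < q) (hqp : q < p) (hσ1 : σ ≠ 1) :
    #σ.cycleFactorsFinset = Nat.gcd #(σ.stepSet q) σ.winding ∧
      ∀ C ∈ σ.cycleFactorsFinset, C.winding = σ.winding / Nat.gcd #(σ.stepSet q) σ.winding := by
  have hw := winding_pos hσ1
  have hk := Nat.gcd_pos_of_pos_right #(σ.stepSet q) hw
  refine card_eq_and_forall_eq_of_sum_eq_mul (Nat.div_pos (Nat.gcd_le_right _ hw) hk)
    (fun C hC => Nat.le_of_dvd (winding_pos (mem_cycleFactorsFinset_iff.mp hC).1.ne_one)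
      (div_gcd_dvd_of_mul_eq hw (hσ.card_stepSet_mul_winding hq hqp hC))) ?_
    (hσ.gcd_le_card_cycleFactorsFinset hq hqp hσ1)
  rw [sum_winding_cycleFactorsFinset, Nat.mul_div_cancel' (Nat.gcd_dvd_right _ _)]

theorem card_cycleFactorsFinset_eq_and_card_stepSet_eq (hσ : σ.HasOneQSteps q)
    (hq : 1 < q) (hqp : q < p) (hσ1 : σ ≠ 1) :
    #σ.cycleFactorsFinset = Nat.gcd #(σ.stepSet q) σ.winding ∧
      ∀ C ∈ σ.cycleFactorsFinset,
        #(C.stepSet 1) = #(σ.stepSet 1) / Nat.gcd #(σ.stepSet q) σ.winding ∧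
          #(C.stepSet q) = #(σ.stepSet q) / Nat.gcd #(σ.stepSet q) σ.winding := by
  obtain ⟨hcard, hwinding⟩ := hσ.card_cycleFactorsFinset_eq_and_winding_eq hq hqp hσ1
  have hdvd := Nat.gcd_dvd_right #(σ.stepSet q) σ.winding
  refine ⟨hcard, fun C hC => ⟨?_, ?_⟩⟩
  · refine eq_div_of_mul_eq_mul_div hdvd (winding_pos hσ1) ?_
    rw [← hwinding C hC, hσ.card_stepSet_one_mul_winding hq hqp hC]
  · refine eq_div_of_mul_eq_mul_div hdvd (winding_pos hσ1) ?_
    rw [← hwinding C hC, hσ.card_stepSet_mul_winding hq hqp hC]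

end HasOneQSteps

end Equiv.Perm

section Tset

open Equiv.Perm

variable {p q r s : ℕ} [NeZero p] {σ : Equiv.Perm (ZMod p)}

lemma hasOneQSteps_of_mem_Tset (hq : 1 < q) (hqp : q < p) (hrs : r + s ≤ p)
    (hσ : σ ∈ Tset p q r s) : σ.HasOneQSteps q := by
  have : Fact (1 < p) := ⟨hq.trans hqp⟩
  obtain ⟨hF, hA, hB⟩ := hσ
  change #(σ.stepSet 1) = r at hA
  change #(σ.stepSet q) = s at hB
  set F : Finset (ZMod p) := {j | σ j = j}
  have h1q := one_ne_natCast hq hqp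
  have hFA : Disjoint F (σ.stepSet 1) := disjoint_left.mpr fun j hjF hjA => by
    rw [mem_filter] at hjF
    rw [mem_stepSet, hjF.2, sub_self] at hjA
    exact zero_ne_one hjA
  have hFAB : Disjoint (F ∪ σ.stepSet 1) (σ.stepSet q) := disjoint_left.mpr fun j hj hjB => by
    rw [mem_stepSet] at hjB
    rcases mem_union.mp hj with hjF | hjA
    · rw [(mem_filter.mp hjF).2, sub_self] at hjB
      exact natCast_ne_zero_of_lt (zero_lt_one.trans hq) hqp hjB.symm
    · exact h1q ((mem_stepSet.mp hjA).symm.trans hjB)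
  have hcover : F ∪ σ.stepSet 1 ∪ σ.stepSet q = univ := by
    refine eq_univ_of_card _ ?_
    rw [card_union_of_disjoint hFAB, card_union_of_disjoint hFA, hF, hA, hB, ZMod.card]
    omega
  intro x
  have hx : x ∈ F ∪ σ.stepSet 1 ∪ σ.stepSet q := hcover ▸ mem_univ x
  simpa [F, or_assoc] using hx

lemma card_support_of_mem_Tset (hrs : r + s ≤ p) (hσ : σ ∈ Tset p q r s) :
    #σ.support = r + s := by
  have h := card_filter_add_card_filter_not (s := univ) (fun j => σ j = j)
  rw [hσ.1, card_univ, ZMod.card] at h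
  change p - r - s + #σ.support = p at h
  omega

end Tset

/-- Every `σ ∈ T_{p,q}(r,s)` with `r + s > 0` has exactly `k = gcd(r, s, (r+sq)/p)` nontrivial
cycles, each with `r/k` 1-steps and `s/k` q-steps; moreover
`sgn(σ) = (-1)^(r + s + gcd(r,s,(r+sq)/p))`. -/
theorem cycle_structure_and_sign (p q r s : ℕ) [NeZero p] (hq : 1 < q) (hqp : q < p)
    (hrs : r + s ≤ p) (hpos : 0 < r + s)
    (σ : Equiv.Perm (ZMod p)) (hσ : σ ∈ Tset p q r s) :
    σ.cycleFactorsFinset.card = Nat.gcd (Nat.gcd r s) ((r + s * q) / p) ∧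
      (∀ C ∈ σ.cycleFactorsFinset,
        (C.support.filter fun j => C j - j = 1).card =
            r / Nat.gcd (Nat.gcd r s) ((r + s * q) / p) ∧
          (C.support.filter fun j => C j - j = (q : ZMod p)).card =
            s / Nat.gcd (Nat.gcd r s) ((r + s * q) / p)) ∧
      Equiv.Perm.sign σ = (-1) ^ (r + s + Nat.gcd (Nat.gcd r s) ((r + s * q) / p)) := by
  have : Fact (1 < p) := ⟨hq.trans hqp⟩
  have hσq := hasOneQSteps_of_mem_Tset hq hqp hrs hσ
  have hsupp := card_support_of_mem_Tset hrs hσ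
  obtain ⟨-, hr, hs⟩ := hσ
  change #(σ.stepSet 1) = r at hr
  change #(σ.stepSet q) = s at hs
  have hw : p * σ.winding = r + q * s := by rw [hσq.mul_winding hq hqp, hr, hs]
  have hσ1 : σ ≠ 1 := by
    rintro rfl
    rw [Equiv.Perm.winding_one, mul_zero] at hw
    nlinarith
  obtain ⟨hcard, hcycles⟩ := hσq.card_cycleFactorsFinset_eq_and_card_stepSet_eq hq hqp hσ1
  rw [hr, hs] at hcycles
  rw [hs] at hcard
  rw [gcd_gcd_div_eq (NeZero.pos p) hw]
  refine ⟨hcard, fun C hC => ?_, by rw [σ.sign_eq_neg_one_pow, hsupp, hcard]⟩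
  rw [C.filter_support_eq_stepSet one_ne_zero,
    C.filter_support_eq_stepSet (natCast_ne_zero_of_lt (zero_lt_one.trans hq) hqp)]
  exact hcycles C hC
end

section
/- Suppose r + sq = ℓp with gcd(r, s, ℓ) = 1 and r, s > 0, r + s ≤ p. Let v ∈ {1,q}^{r+s} be the step word of the greedy lattice path ν from (0,0) to (r,s) (east step ↦ 1, north step ↦ q). Then for any x ∈ {1,...,p}, the r+s points x + x_i + q·y_i mod p (0 ≤ i < r+s), where (x_i,y_i) = ν_i, are pairwise distinct; hence (x; v) defines a well-defined cycle on {1,...,p} with r 1-steps and s q-steps. -/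
open Finset

/-- The greedy lattice path from `(0,0)` toward `(r,s)`: from `(x,y)`, step east if
`s·x ≤ r·y`, otherwise step north. -/
def greedyPath (r s : ℕ) : ℕ → ℕ × ℕ
  | 0 => (0, 0)
  | i + 1 =>
    let v := greedyPath r s i
    if s * v.1 ≤ r * v.2 then (v.1 + 1, v.2) else (v.1, v.2 + 1)

namespace GreedyAux

lemma gp_succ (r s i : ℕ) : greedyPath r s (i + 1) =
    if s * (greedyPath r s i).1 ≤ r * (greedyPath r s i).2
    then ((greedyPath r s i).1 + 1, (greedyPath r s i).2)
    else ((greedyPath r s i).1, (greedyPath r s i).2 + 1) := rfl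

lemma gp_sum (r s : ℕ) : ∀ i, (greedyPath r s i).1 + (greedyPath r s i).2 = i := by
  intro i
  induction i with
  | zero => rfl
  | succ i ih => rw [gp_succ]; split <;> simp <;> omega

lemma gp_fst_mono (r s : ℕ) : Monotone fun i => (greedyPath r s i).1 :=
  monotone_nat_of_le_succ fun i => by rw [gp_succ]; split <;> simp

lemma gp_snd_mono (r s : ℕ) : Monotone fun i => (greedyPath r s i).2 :=
  monotone_nat_of_le_succ fun i => by rw [gp_succ]; split <;> simp

lemma gp_band (r s : ℕ) (hr : 0 < r) : ∀ i,
    s * (greedyPath r s i).1 ≤ r * (greedyPath r s i).2 + s ∧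
    r * (greedyPath r s i).2 < s * (greedyPath r s i).1 + r := by
  intro i
  induction i with
  | zero => simp [greedyPath]; omega
  | succ i ih =>
    obtain ⟨h1, h2⟩ := ih
    rw [gp_succ]
    split <;> rename_i h
    · simp only [Nat.mul_succ]
      constructor <;> omega
    · simp only [Nat.mul_succ]
      constructor <;> omega

lemma gp_end (r s : ℕ) (hr : 0 < r) (hs : 0 < s) : greedyPath r s (r + s) = (r, s) := by
  have hsum := gp_sum r s (r + s)
  have hband := gp_band r s hr (r + s)
  set X := (greedyPath r s (r + s)).1 with hX
  set Y := (greedyPath r s (r + s)).2 with hY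
  have h1 : (s : ℤ) * X ≤ r * Y + s := by exact_mod_cast hband.1
  have h2 : (r : ℤ) * Y < s * X + r := by exact_mod_cast hband.2
  have h3 : (X : ℤ) + Y = r + s := by exact_mod_cast hsum
  have hrz : (0 : ℤ) < r := by exact_mod_cast hr
  have hsz : (0 : ℤ) < s := by exact_mod_cast hs
  have e : (s : ℤ) * X - r * Y = ((r : ℤ) + s) * ((X : ℤ) - r) := by linear_combination (-(r : ℤ)) * h3
  have hXr : (X : ℤ) = r := by
    rcases lt_trichotomy ((X : ℤ)) r with h | h | h
    · exfalso
      have h4 : (X : ℤ) - r ≤ -1 := by linarith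
      have h5 : ((r : ℤ) + s) * ((X : ℤ) - r) ≤ ((r : ℤ) + s) * (-1) :=
        mul_le_mul_of_nonneg_left h4 (by linarith)
      linarith
    · exact h
    · exfalso
      have h4 : (1 : ℤ) ≤ (X : ℤ) - r := by linarith
      have h5 : ((r : ℤ) + s) * 1 ≤ ((r : ℤ) + s) * ((X : ℤ) - r) :=
        mul_le_mul_of_nonneg_left h4 (by linarith)
      linarith
  have hXr' : X = r := by exact_mod_cast hXr
  have hYs : Y = s := by omega
  have : greedyPath r s (r + s) = (X, Y) := rfl
  rw [this, hXr', hYs]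

/-- The value `xᵢ + q·yᵢ` along the greedy path. -/
def gpF (q r s i : ℕ) : ℕ := (greedyPath r s i).1 + q * (greedyPath r s i).2

lemma gpF_succ (q r s i : ℕ) : gpF q r s (i + 1) = gpF q r s i +
    (if s * (greedyPath r s i).1 ≤ r * (greedyPath r s i).2 then 1 else q) := by
  unfold gpF
  rw [gp_succ]
  split <;> simp <;> ring

lemma gpF_lt (q r s : ℕ) (hq : 0 < q) {i j : ℕ} (h : i < j) : gpF q r s i < gpF q r s j := by
  have : StrictMono (gpF q r s) := by
    apply strictMono_nat_of_lt_succ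
    intro i
    rw [gpF_succ]
    split <;> omega
  exact this h

lemma gpF_mono (q r s : ℕ) (hq : 0 < q) {i j : ℕ} (h : i ≤ j) : gpF q r s i ≤ gpF q r s j := by
  rcases h.lt_or_eq with h | h
  · exact (gpF_lt q r s hq h).le
  · rw [h]

/-- Key arithmetic lemma: distinct indices with congruent `F`-values must be `≥ r+s` apart. -/
lemma gp_key (p q r s ℓ : ℕ) (hq : 0 < q) (hp : 0 < p) (hr : 0 < r) (hs : 0 < s)
    (hrs : r + s ≤ p) (hℓ : r + s * q = ℓ * p) (hgcd : Nat.gcd (Nat.gcd r s) ℓ = 1)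
    {i j : ℕ} (hij : i < j) (hdvd : p ∣ gpF q r s j - gpF q r s i) : r + s ≤ j - i := by
  have hXm : (greedyPath r s i).1 ≤ (greedyPath r s j).1 := gp_fst_mono r s hij.le
  have hYm : (greedyPath r s i).2 ≤ (greedyPath r s j).2 := gp_snd_mono r s hij.le
  set a := (greedyPath r s j).1 - (greedyPath r s i).1 with hadef
  set b := (greedyPath r s j).2 - (greedyPath r s i).2 with hbdef
  have ha : (greedyPath r s j).1 = (greedyPath r s i).1 + a := by omega
  have hb : (greedyPath r s j).2 = (greedyPath r s i).2 + b := by omega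
  have hFd : gpF q r s j = gpF q r s i + (a + q * b) := by
    unfold gpF; rw [ha, hb]; ring
  have hdvd' : p ∣ a + q * b := by
    have := hdvd
    rw [hFd, Nat.add_sub_cancel_left] at this
    exact this
  -- pass to ℤ to show s*a = r*b
  have hbi := gp_band r s hr i
  have hbj := gp_band r s hr j
  have hd1 : (p : ℤ) ∣ (a : ℤ) + q * b := by
    have : ((a + q * b : ℕ) : ℤ) = (a : ℤ) + q * b := by push_cast; ring
    rw [← this]
    exact_mod_cast hdvd'
  have hd2 : (p : ℤ) ∣ (r : ℤ) + s * q := ⟨ℓ, by exact_mod_cast hℓ.trans (Nat.mul_comm ℓ p)⟩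
  have hdsr : (p : ℤ) ∣ (s : ℤ) * a - r * b := by
    have hre : (s : ℤ) * a - r * b = s * ((a : ℤ) + q * b) - b * ((r : ℤ) + s * q) := by ring
    rw [hre]
    exact dvd_sub (hd1.mul_left s) (hd2.mul_left b)
  have hA : (s : ℤ) * (greedyPath r s j).1 ≤ r * (greedyPath r s j).2 + s := by exact_mod_cast hbj.1
  have hB : (r : ℤ) * (greedyPath r s j).2 < s * (greedyPath r s j).1 + r := by exact_mod_cast hbj.2
  have hC : (s : ℤ) * (greedyPath r s i).1 ≤ r * (greedyPath r s i).2 + s := by exact_mod_cast hbi.1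
  have hD : (r : ℤ) * (greedyPath r s i).2 < s * (greedyPath r s i).1 + r := by exact_mod_cast hbi.2
  have haz : (greedyPath r s j).1 = ((greedyPath r s i).1 : ℤ) + a := by exact_mod_cast ha
  have hbz : (greedyPath r s j).2 = ((greedyPath r s i).2 : ℤ) + b := by exact_mod_cast hb
  have hpz : ((r : ℤ) + s) ≤ p := by exact_mod_cast hrs
  have e1 : (s : ℤ) * a - r * b =
      ((s : ℤ) * (greedyPath r s j).1 - r * (greedyPath r s j).2) -
        ((s : ℤ) * (greedyPath r s i).1 - r * (greedyPath r s i).2) := by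
    linear_combination (-(s : ℤ)) * haz + (r : ℤ) * hbz
  have habs : |(s : ℤ) * a - r * b| < p := by
    rw [abs_lt]
    constructor <;> linarith [hA, hB, hC, hD, hpz, e1]
  have hz0 : (s : ℤ) * a - r * b = 0 := Int.eq_zero_of_abs_lt_dvd hdsr habs
  have hnat : s * a = r * b := by
    have : (s : ℤ) * a = r * b := by linarith
    exact_mod_cast this
  -- gcd analysis
  set g := Nat.gcd r s with hgdef
  have hg0 : 0 < g := Nat.gcd_pos_of_pos_left s hr
  obtain ⟨r', hr'⟩ : g ∣ r := Nat.gcd_dvd_left r s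
  obtain ⟨s', hs'⟩ : g ∣ s := Nat.gcd_dvd_right r s
  have hco : Nat.Coprime r' s' := by
    have h := Nat.coprime_div_gcd_div_gcd (m := r) (n := s) hg0
    rwa [← hgdef, hr', hs', Nat.mul_div_cancel_left _ hg0, Nat.mul_div_cancel_left _ hg0] at h
  have hr'0 : 0 < r' := by
    rcases Nat.eq_zero_or_pos r' with h | h
    · subst h; simp at hr'; omega
    · exact h
  have hs'0 : 0 < s' := by
    rcases Nat.eq_zero_or_pos s' with h | h
    · subst h; simp at hs'; omega
    · exact h
  have hsab : s' * a = r' * b := by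
    have h : g * (s' * a) = g * (r' * b) := by
      have := hnat
      rw [hr', hs'] at this
      calc g * (s' * a) = g * s' * a := by ring
        _ = g * r' * b := this
        _ = g * (r' * b) := by ring
    exact Nat.eq_of_mul_eq_mul_left hg0 h
  obtain ⟨t, hta⟩ : r' ∣ a := hco.dvd_of_dvd_mul_left ⟨b, hsab⟩
  have htb : b = s' * t := by
    have h : r' * (s' * t) = r' * b := by
      calc r' * (s' * t) = s' * (r' * t) := by ring
        _ = s' * a := by rw [hta]
        _ = r' * b := hsab
    exact (Nat.eq_of_mul_eq_mul_left hr'0 h).symm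
  have hsum2 : g * (r' + q * s') = ℓ * p := by
    have h : g * (r' + q * s') = r + s * q := by rw [hr', hs']; ring
    rw [h, hℓ]
  have hgp : g ∣ p := by
    have h1 : g ∣ ℓ * p := ⟨r' + q * s', hsum2.symm⟩
    exact Nat.Coprime.dvd_of_dvd_mul_left hgcd h1
  obtain ⟨p'', hp''⟩ := hgp
  have hp''0 : 0 < p'' := by
    rcases Nat.eq_zero_or_pos p'' with h | h
    · subst h; simp at hp''; omega
    · exact h
  have hsum3 : r' + q * s' = ℓ * p'' := by
    have h : g * (r' + q * s') = g * (ℓ * p'') := by rw [hsum2, hp'']; ring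
    exact Nat.eq_of_mul_eq_mul_left hg0 h
  have hdvd3 : p ∣ t * (r' + q * s') := by
    have h : a + q * b = t * (r' + q * s') := by rw [hta, htb]; ring
    rwa [h] at hdvd'
  have hgtl : g ∣ t * ℓ := by
    have h : g * p'' ∣ (t * ℓ) * p'' := by
      have : t * (r' + q * s') = (t * ℓ) * p'' := by rw [hsum3]; ring
      rw [← hp'', ← this]
      exact hdvd3
    exact (mul_dvd_mul_iff_right hp''0.ne').mp h
  have hgt : g ∣ t := Nat.Coprime.dvd_of_dvd_mul_right hgcd hgtl
  have ht0 : t ≠ 0 := by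
    rintro rfl
    have ha0 : a = 0 := by rw [hta]; ring
    have hb0 : b = 0 := by rw [htb]; ring
    have hlt := gpF_lt q r s hq hij
    rw [hFd, ha0, hb0] at hlt
    omega
  have hgt' : g ≤ t := Nat.le_of_dvd (Nat.pos_of_ne_zero ht0) hgt
  have hji : j - i = a + b := by
    have si := gp_sum r s i
    have sj := gp_sum r s j
    omega
  have hab : a + b = t * (r' + s') := by rw [hta, htb]; ring
  have hfin : r + s ≤ t * (r' + s') :=
    calc r + s = g * (r' + s') := by rw [hr', hs']; ring
      _ ≤ t * (r' + s') := Nat.mul_le_mul_right _ hgt'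
  rw [hji, hab]
  exact hfin

lemma gp_count (r s : ℕ) : ∀ m,
    (((Finset.range m).filter
      (fun i => s * (greedyPath r s i).1 ≤ r * (greedyPath r s i).2)).card
        = (greedyPath r s m).1) ∧
    (((Finset.range m).filter
      (fun i => ¬ s * (greedyPath r s i).1 ≤ r * (greedyPath r s i).2)).card
        = (greedyPath r s m).2) := by
  intro m
  induction m with
  | zero => simp [greedyPath]
  | succ m ih =>
    have hm1 : m ∉ (Finset.range m).filter
        (fun i => s * (greedyPath r s i).1 ≤ r * (greedyPath r s i).2) := by simp
    have hm2 : m ∉ (Finset.range m).filter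
        (fun i => ¬ s * (greedyPath r s i).1 ≤ r * (greedyPath r s i).2) := by simp
    rw [Finset.range_add_one, Finset.filter_insert, Finset.filter_insert, gp_succ]
    by_cases h : s * (greedyPath r s m).1 ≤ r * (greedyPath r s m).2
    · rw [if_pos h, if_pos h, if_neg (not_not_intro h),
        Finset.card_insert_of_notMem hm1]
      exact ⟨by rw [ih.1], ih.2⟩
    · rw [if_neg h, if_neg h, if_pos h,
        Finset.card_insert_of_notMem hm2]
      exact ⟨ih.1, by rw [ih.2]⟩

end GreedyAux

open GreedyAux in
/-- If `r + sq = ℓp` with `gcd(r,s,ℓ) = 1`, then for any starting point `x` the `r+s` points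
`x + xᵢ + q·yᵢ (mod p)` along the greedy path are pairwise distinct; hence `(x; v)` defines a
cycle on `ZMod p` with `r` 1-steps and `s` q-steps. -/
theorem greedy_cycle_well_defined (p q r s ℓ : ℕ) [NeZero p] (hq : 1 < q) (hqp : q < p)
    (hr : 0 < r) (hs : 0 < s) (hrs : r + s ≤ p)
    (hℓ : r + s * q = ℓ * p) (hgcd : Nat.gcd (Nat.gcd r s) ℓ = 1) (x : ZMod p) :
    Function.Injective (fun i : Fin (r + s) =>
        x + ((greedyPath r s i).1 : ZMod p) + (q : ZMod p) * ((greedyPath r s i).2 : ZMod p)) ∧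
      ∃ C : Equiv.Perm (ZMod p), C.IsCycle ∧
        C.support = Finset.image (fun i : Fin (r + s) =>
          x + ((greedyPath r s i).1 : ZMod p) + (q : ZMod p) * ((greedyPath r s i).2 : ZMod p))
          Finset.univ ∧
        (C.support.filter fun j => C j - j = 1).card = r ∧
        (C.support.filter fun j => C j - j = (q : ZMod p)).card = s := by
  classical
  have hp1 : 1 < p := hq.trans hqp
  haveI : Fact (1 < p) := ⟨hp1⟩
  have hq0 : 0 < q := by omega
  set n := r + s with hn
  have hn2 : 2 ≤ n := by omega
  set z : Fin n → ZMod p := fun i =>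
      x + ((greedyPath r s i).1 : ZMod p) + (q : ZMod p) * ((greedyPath r s i).2 : ZMod p)
    with hzdef
  have hzF : ∀ i : Fin n, z i = x + ((gpF q r s i : ℕ) : ZMod p) := by
    intro i
    simp only [hzdef, gpF]
    push_cast
    ring
  -- injectivity
  have hinj : Function.Injective z := by
    have key : ∀ i j : Fin n, (i : ℕ) < j → z i ≠ z j := by
      intro i j hij heq
      rw [hzF, hzF] at heq
      have h1 : ((gpF q r s i : ℕ) : ZMod p) = ((gpF q r s j : ℕ) : ZMod p) :=
        add_left_cancel heq
      have h2 : gpF q r s (i : ℕ) ≡ gpF q r s (j : ℕ) [MOD p] :=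
        (ZMod.natCast_eq_natCast_iff _ _ _).mp h1
      have h3 : p ∣ gpF q r s (j : ℕ) - gpF q r s (i : ℕ) :=
        (Nat.modEq_iff_dvd' (gpF_mono q r s hq0 hij.le)).mp h2
      have h4 := gp_key p q r s ℓ hq0 (by omega) hr hs hrs hℓ hgcd hij h3
      have := j.isLt
      omega
    intro i j heq
    rcases lt_trichotomy ((i : ℕ)) ((j : ℕ)) with h | h | h
    · exact absurd heq (key i j h)
    · exact Fin.ext h
    · exact absurd heq.symm (key j i h)
  refine ⟨hinj, ?_⟩
  -- the cycle
  set L : List (ZMod p) := (List.finRange n).map z with hL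
  have hLlen : L.length = n := by simp [hL]
  have hLnd : L.Nodup := (List.nodup_finRange n).map hinj
  set C : Equiv.Perm (ZMod p) := L.formPerm with hC
  have hCyc : C.IsCycle := List.isCycle_formPerm hLnd (by rw [hLlen]; omega)
  have hnotsing : ∀ y : ZMod p, L ≠ [y] := by
    intro y hy
    apply_fun List.length at hy
    rw [hLlen] at hy
    simp at hy
    omega
  have hsupp : C.support = Finset.image z Finset.univ := by
    rw [hC, List.support_formPerm_of_nodup L hLnd hnotsing]
    ext y
    simp [hL]
  have hCapp : ∀ i : Fin n,
      C (z i) = z ⟨((i : ℕ) + 1) % n, Nat.mod_lt _ (by omega)⟩ := by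
    intro i
    have hlt : (i : ℕ) < L.length := by rw [hLlen]; exact i.isLt
    have h1 : z i = L[(i : ℕ)]'hlt := by
      simp [hL]
    rw [hC, h1, List.formPerm_apply_getElem L hLnd _ hlt]
    simp only [hL, List.getElem_map, List.getElem_finRange, List.length_map,
      List.length_finRange]
    congr 1
  -- the step value
  have hFwrap : ∀ i : Fin n,
      ((gpF q r s (((i : ℕ) + 1) % n) : ℕ) : ZMod p) = ((gpF q r s ((i : ℕ) + 1) : ℕ) : ZMod p) := by
    intro i
    rcases Nat.lt_or_ge ((i : ℕ) + 1) n with h | h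
    · rw [Nat.mod_eq_of_lt h]
    · have hieq : (i : ℕ) + 1 = n := by have := i.isLt; omega
      rw [hieq, Nat.mod_self]
      have h1 : gpF q r s 0 = 0 := by simp [gpF, greedyPath]
      have h2 : gpF q r s n = r + q * s := by
        unfold gpF
        rw [hn, gp_end r s hr hs]
      rw [h1, h2]
      have h3 : r + q * s = ℓ * p := by rw [← hℓ]; ring
      rw [h3]
      simp [ZMod.natCast_self]
  have hstep : ∀ i : Fin n, C (z i) - z i =
      ((if s * (greedyPath r s (i : ℕ)).1 ≤ r * (greedyPath r s (i : ℕ)).2 then 1 else q : ℕ) :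
        ZMod p) := by
    intro i
    rw [hCapp i, hzF, hzF]
    have h1 : ((gpF q r s ((⟨((i : ℕ) + 1) % n, Nat.mod_lt _ (by omega)⟩ : Fin n) : ℕ) : ℕ) :
        ZMod p) = ((gpF q r s ((i : ℕ) + 1) : ℕ) : ZMod p) := hFwrap i
    rw [h1, gpF_succ]
    push_cast
    ring
  -- count filter cards
  have hval1 : ∀ i : Fin n,
      (((if s * (greedyPath r s (i : ℕ)).1 ≤ r * (greedyPath r s (i : ℕ)).2 then 1 else q : ℕ) :
        ZMod p) = 1 ↔ s * (greedyPath r s (i : ℕ)).1 ≤ r * (greedyPath r s (i : ℕ)).2) := by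
    intro i
    by_cases h : s * (greedyPath r s (i : ℕ)).1 ≤ r * (greedyPath r s (i : ℕ)).2
    · simp [h]
    · simp only [h, if_false, iff_false]
      intro hc
      have := congrArg ZMod.val hc
      rw [ZMod.val_cast_of_lt hqp, ZMod.val_one] at this
      omega
  have hvalq : ∀ i : Fin n,
      (((if s * (greedyPath r s (i : ℕ)).1 ≤ r * (greedyPath r s (i : ℕ)).2 then 1 else q : ℕ) :
        ZMod p) = (q : ZMod p) ↔ ¬ s * (greedyPath r s (i : ℕ)).1 ≤ r * (greedyPath r s (i : ℕ)).2) := by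
    intro i
    by_cases h : s * (greedyPath r s (i : ℕ)).1 ≤ r * (greedyPath r s (i : ℕ)).2
    · simp only [h, if_true, iff_false, not_true, Nat.cast_one]
      intro hc
      have := congrArg ZMod.val hc
      rw [ZMod.val_cast_of_lt hqp, ZMod.val_one] at this
      omega
    · simp [h]
  have hcount := gp_count r s n
  have hend := gp_end r s hr hs
  have hcard : ∀ c : ZMod p, (C.support.filter fun j => C j - j = c).card =
      ((Finset.range n).filter
        (fun k => ((if s * (greedyPath r s k).1 ≤ r * (greedyPath r s k).2 then 1 else q : ℕ) :
          ZMod p) = c)).card := by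
    intro c
    rw [hsupp, Finset.filter_image, Finset.card_image_of_injective _ hinj]
    have hfc : (Finset.univ.filter fun i : Fin n => C (z i) - z i = c) =
        (Finset.univ.filter fun i : Fin n =>
          ((if s * (greedyPath r s (i : ℕ)).1 ≤ r * (greedyPath r s (i : ℕ)).2 then 1 else q : ℕ) :
            ZMod p) = c) := by
      apply Finset.filter_congr
      intro i _
      rw [hstep i]
    rw [hfc, Finset.card_filter, Finset.card_filter]
    exact Fin.sum_univ_eq_sum_range
      (fun k => if ((if s * (greedyPath r s k).1 ≤ r * (greedyPath r s k).2 then 1 else q : ℕ) :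
        ZMod p) = c then 1 else 0) n
  refine ⟨C, hCyc, hsupp, ?_, ?_⟩
  · rw [hcard 1]
    have : ((Finset.range n).filter
        (fun k => ((if s * (greedyPath r s k).1 ≤ r * (greedyPath r s k).2 then 1 else q : ℕ) :
          ZMod p) = 1)) = ((Finset.range n).filter
        (fun k => s * (greedyPath r s k).1 ≤ r * (greedyPath r s k).2)) := by
      apply Finset.filter_congr
      intro k hk
      have hkn : k < n := Finset.mem_range.mp hk
      exact hval1 ⟨k, hkn⟩
    rw [this, hcount.1, hn, hend]
  · rw [hcard (q : ZMod p)]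
    have : ((Finset.range n).filter
        (fun k => ((if s * (greedyPath r s k).1 ≤ r * (greedyPath r s k).2 then 1 else q : ℕ) :
          ZMod p) = (q : ZMod p))) = ((Finset.range n).filter
        (fun k => ¬ s * (greedyPath r s k).1 ≤ r * (greedyPath r s k).2)) := by
      apply Finset.filter_congr
      intro k hk
      have hkn : k < n := Finset.mem_range.mp hk
      exact hvalq ⟨k, hkn⟩
    rw [this, hcount.2, hn, hend]
end

section
/- Suppose p divides r + sq, with ℓ = (r+sq)/p, k = gcd(r,s,ℓ), r, s > 0 and r + s ≤ p. Let v be the step word of the greedy lattice path from (0,0) to (r/k, s/k), and for 1 ≤ j ≤ k let C_j be the cycle (1 + (j-1)(q-1); v). Then the cycles C_1, ..., C_k are pairwise disjoint, and σ = C_1 C_2 ⋯ C_k is a well-defined element of T_{p,q}(r,s). In particular T_{p,q}(r,s) is nonempty. -/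
open Finset

namespace TsetAux

lemma gp_succ (r s t : ℕ) : greedyPath r s (t+1) =
    if s * (greedyPath r s t).1 ≤ r * (greedyPath r s t).2
    then ((greedyPath r s t).1 + 1, (greedyPath r s t).2)
    else ((greedyPath r s t).1, (greedyPath r s t).2 + 1) := rfl

lemma gp_sum (a b : ℕ) : ∀ t, (greedyPath a b t).1 + (greedyPath a b t).2 = t := by
  intro t
  induction t with
  | zero => simp [greedyPath]
  | succ t ih => rw [gp_succ]; split <;> simp <;> omega

lemma gp_D (a b : ℕ) (ha : 0 < a) : ∀ t,
    1 - (a:ℤ) ≤ (b:ℤ) * (greedyPath a b t).1 - (a:ℤ) * (greedyPath a b t).2 ∧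
    (b:ℤ) * (greedyPath a b t).1 - (a:ℤ) * (greedyPath a b t).2 ≤ b := by
  intro t
  induction t with
  | zero => simp [greedyPath]; omega
  | succ t ih =>
    rw [gp_succ]
    split
    · rename_i h
      have h' : (b:ℤ) * (greedyPath a b t).1 ≤ (a:ℤ) * (greedyPath a b t).2 := by
        exact_mod_cast h
      simp only
      push_cast
      constructor <;> nlinarith [ih.1, ih.2]
    · rename_i h
      have h' : ¬ ((b:ℤ) * (greedyPath a b t).1 ≤ (a:ℤ) * (greedyPath a b t).2) := by
        exact_mod_cast h
      simp only
      push_cast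
      constructor <;> nlinarith [ih.1, ih.2]

lemma eq_zero_of_dvd_of_abs_lt' {P Z : ℤ} (h : P ∣ Z) (h1 : -P < Z) (h2 : Z < P) : Z = 0 := by
  rcases h with ⟨c, rfl⟩
  have hP : 0 < P := by nlinarith
  rcases lt_trichotomy c 0 with h | h | h
  · have : c ≤ -1 := by omega
    nlinarith
  · simp [h]
  · have : 1 ≤ c := by omega
    nlinarith

lemma gp_end (a b : ℕ) (ha : 0 < a) (hb : 0 < b) : greedyPath a b (a+b) = (a,b) := by
  have hsum := gp_sum a b (a+b)
  have hD := gp_D a b ha (a+b)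
  set x := (greedyPath a b (a+b)).1 with hx
  set y := (greedyPath a b (a+b)).2 with hy
  have hyx : (y:ℤ) = (a:ℤ) + b - x := by omega
  have key : (b:ℤ) * x - (a:ℤ) * y = ((a:ℤ)+b) * ((x:ℤ) - a) := by rw [hyx]; ring
  have hz : ((x:ℤ) - a) = 0 := by
    rcases lt_trichotomy ((x:ℤ) - a) 0 with h | h | h
    · have h' : (x:ℤ) - a ≤ -1 := by omega
      have : ((a:ℤ)+b) * ((x:ℤ) - a) ≤ ((a:ℤ)+b) * (-1) :=
        mul_le_mul_of_nonneg_left h' (by positivity)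
      have := hD.1
      rw [key] at this
      nlinarith
    · exact h
    · have h' : (1:ℤ) ≤ (x:ℤ) - a := by omega
      have : ((a:ℤ)+b) * 1 ≤ ((a:ℤ)+b) * ((x:ℤ) - a) :=
        mul_le_mul_of_nonneg_left h' (by positivity)
      have := hD.2
      rw [key] at this
      nlinarith
  have hxa : x = a := by have := sub_eq_zero.mp hz; exact_mod_cast this
  have hyb : y = b := by omega
  rw [Prod.ext_iff]; exact ⟨hxa, hyb⟩

lemma gp_count (a b : ℕ) : ∀ t, (greedyPath a b t).1 =
    ((Finset.range t).filter (fun i => b * (greedyPath a b i).1 ≤ a * (greedyPath a b i).2)).card := by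
  intro t
  induction t with
  | zero => simp [greedyPath]
  | succ t ih =>
    rw [Finset.range_add_one, Finset.filter_insert]
    rw [gp_succ]
    split
    · rename_i h
      rw [Finset.card_insert_of_notMem (by simp)]
      simp only
      omega
    · simp only
      omega

lemma card_filter_fin (n : ℕ) (Q : ℕ → Prop) [DecidablePred Q] :
    (univ.filter (fun t : Fin n => Q t.val)).card = ((range n).filter Q).card := by
  rw [card_filter, card_filter]
  exact Fin.sum_univ_eq_sum_range (fun i => if Q i then 1 else 0) n

lemma key_arith (p q a b L kk J J' T T' Y Y' D D' : ℤ)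
    (hp : 0 < p)
    (hlp : a + b * q = L * p)
    (hJ : 0 ≤ J) (hJ' : 0 ≤ J') (hJk : J < kk) (hJk' : J' < kk)
    (hT : 0 ≤ T) (hT' : 0 ≤ T') (hTn : T < a + b) (hTn' : T' < a + b)
    (hD : D = b * T - (a + b) * Y) (hD' : D' = b * T' - (a + b) * Y')
    (hD1 : 1 - a ≤ D) (hD2 : D ≤ b) (hD1' : 1 - a ≤ D') (hD2' : D' ≤ b)
    (hkp : (a + b) * kk ≤ p)
    (hgcd : ∀ Td : ℤ, (a + b) ∣ b * Td → (a + b) ∣ L * Td → (a + b) ∣ Td)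
    (H : p ∣ ((1 + J' * (q - 1) + T' + (q - 1) * Y') - (1 + J * (q - 1) + T + (q - 1) * Y))) :
    J = J' ∧ T = T' := by
  have H1 : p ∣ (q - 1) * (J' + Y' - J - Y) + (T' - T) := by
    have e : (1 + J' * (q - 1) + T' + (q - 1) * Y') - (1 + J * (q - 1) + T + (q - 1) * Y)
        = (q - 1) * (J' + Y' - J - Y) + (T' - T) := by ring
    rwa [e] at H
  have hZdvd : p ∣ (a + b) * (J' - J) + (D - D') := by
    have e : (a + b) * (J' - J) + (D - D') =
        L * p * (J' + Y' - J - Y) - b * ((q - 1) * (J' + Y' - J - Y) + (T' - T)) := by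
      rw [hD, hD']; linear_combination (J' + Y' - J - Y) * hlp
    rw [e]
    exact dvd_sub ⟨L * (J' + Y' - J - Y), by ring⟩ (H1.mul_left b)
  have h5a : (a + b) * (J' - J) ≤ (a + b) * (kk - 1) :=
    mul_le_mul_of_nonneg_left (by omega) (by omega)
  have h5b : (a + b) * (-(kk - 1)) ≤ (a + b) * (J' - J) :=
    mul_le_mul_of_nonneg_left (by omega) (by omega)
  have hmul1 : (a + b) * (kk - 1) = (a + b) * kk - (a + b) := by ring
  have hmul2 : (a + b) * (-(kk - 1)) = -((a + b) * kk) + (a + b) := by ring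
  have hZ0 : (a + b) * (J' - J) + (D - D') = 0 := by
    apply eq_zero_of_dvd_of_abs_lt' hZdvd
    · omega
    · omega
  have hJJ0 : (a + b) * (J' - J) = 0 := by
    apply eq_zero_of_dvd_of_abs_lt' (Dvd.intro _ rfl)
    · omega
    · omega
  have hJJ : J' - J = 0 := by
    rcases mul_eq_zero.mp hJJ0 with h | h
    · omega
    · exact h
  have hDD : D = D' := by omega
  have h6 : (a + b) * (J' + Y' - J - Y) = b * (T' - T) := by
    linear_combination hD' - hD + hDD + (a + b) * hJJ
  have h7 : (a + b) * p ∣ (a + b) * ((q - 1) * (J' + Y' - J - Y) + (T' - T)) :=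
    mul_dvd_mul_left _ H1
  have h8 : (a + b) * ((q - 1) * (J' + Y' - J - Y) + (T' - T)) = ((T' - T) * L) * p := by
    linear_combination (q - 1) * h6 + (T' - T) * hlp
  rw [h8] at h7
  have h9 : (a + b) ∣ (T' - T) * L := (mul_dvd_mul_iff_right (by omega : p ≠ 0)).mp h7
  have h10 : (a + b) ∣ b * (T' - T) := ⟨J' + Y' - J - Y, h6.symm⟩
  have h11 : (a + b) ∣ (T' - T) := hgcd _ h10 (by rwa [mul_comm] at h9)
  have hTd0 : T' - T = 0 := eq_zero_of_dvd_of_abs_lt' h11 (by omega) (by omega)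
  exact ⟨by omega, by omega⟩

end TsetAux

/-- With `ℓ = (r+sq)/p` and `k = gcd(r,s,ℓ)`, the `k` cycles `C_j = (1+(j-1)(q-1); v)` built
from the greedy path to `(r/k, s/k)` are pairwise disjoint (their points, taken jointly, are
distinct), and their product is a well-defined element of `T_{p,q}(r,s)`; in particular
`T_{p,q}(r,s)` is nonempty. -/
theorem Tset_nonempty_of_dvd (p q r s ℓ k : ℕ) [NeZero p] (hq : 1 < q) (hqp : q < p)
    (hr : 0 < r) (hs : 0 < s) (hrs : r + s ≤ p)
    (hℓ : r + s * q = ℓ * p) (hk : k = Nat.gcd (Nat.gcd r s) ℓ) :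
    Function.Injective (fun jp : Fin k × Fin (r / k + s / k) =>
        ((1 + (jp.1 : ℕ) * (q - 1) + (greedyPath (r / k) (s / k) (jp.2 : ℕ)).1 +
            q * (greedyPath (r / k) (s / k) (jp.2 : ℕ)).2 : ℕ) : ZMod p)) ∧
      (Tset p q r s).Nonempty := by
  have hp1 : 1 < p := hq.trans hqp
  haveI : Fact (1 < p) := ⟨hp1⟩
  have hkr : k ∣ r := by
    rw [hk]; exact (Nat.gcd_dvd_left (Nat.gcd r s) ℓ).trans (Nat.gcd_dvd_left r s)
  have hks : k ∣ s := by
    rw [hk]; exact (Nat.gcd_dvd_left (Nat.gcd r s) ℓ).trans (Nat.gcd_dvd_right r s)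
  have hkl : k ∣ ℓ := by rw [hk]; exact Nat.gcd_dvd_right _ _
  have hl0 : 0 < ℓ := by
    rcases Nat.eq_zero_or_pos ℓ with h | h
    · rw [h] at hℓ; simp at hℓ; omega
    · exact h
  have hk0 : 0 < k := by rw [hk]; exact Nat.gcd_pos_of_pos_right _ hl0
  set a := r / k with hadef
  set b := s / k with hbdef
  set L := ℓ / k with hLdef
  have hra : k * a = r := Nat.mul_div_cancel' hkr
  have hsb : k * b = s := Nat.mul_div_cancel' hks
  have hlL : k * L = ℓ := Nat.mul_div_cancel' hkl
  have ha : 0 < a := by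
    rcases Nat.eq_zero_or_pos a with h | h
    · rw [h, Nat.mul_zero] at hra; omega
    · exact h
  have hb : 0 < b := by
    rcases Nat.eq_zero_or_pos b with h | h
    · rw [h, Nat.mul_zero] at hsb; omega
    · exact h
  have habq : a + b * q = L * p := by
    apply Nat.eq_of_mul_eq_mul_left hk0
    calc k * (a + b * q) = k * a + (k * b) * q := by ring
      _ = r + s * q := by rw [hra, hsb]
      _ = ℓ * p := hℓ
      _ = (k * L) * p := by rw [hlL]
      _ = k * (L * p) := by ring
  have hcop : Nat.gcd (Nat.gcd a b) L = 1 := by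
    apply Nat.eq_of_mul_eq_mul_left hk0
    calc k * Nat.gcd (Nat.gcd a b) L
        = Nat.gcd (Nat.gcd (k * a) (k * b)) (k * L) := by
          rw [Nat.gcd_mul_left, Nat.gcd_mul_left]
      _ = Nat.gcd (Nat.gcd r s) ℓ := by rw [hra, hsb, hlL]
      _ = k := hk.symm
      _ = k * 1 := by ring
  have hkn : k * (a + b) = r + s := by rw [Nat.mul_add, hra, hsb]
  have hgcd : ∀ Td : ℤ, ((a:ℤ) + b) ∣ (b:ℤ) * Td → ((a:ℤ) + b) ∣ (L:ℤ) * Td →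
      ((a:ℤ) + b) ∣ Td := by
    intro Td h1 h2
    have h3 : ((a:ℤ) + b) ∣ (a:ℤ) * Td := by
      have e : (a:ℤ) * Td = ((a:ℤ) + b) * Td - (b:ℤ) * Td := by ring
      rw [e]; exact dvd_sub ⟨Td, rfl⟩ h1
    have A1 := Nat.gcd_eq_gcd_ab a b
    have A2 := Nat.gcd_eq_gcd_ab (Nat.gcd a b) L
    rw [hcop, Nat.cast_one] at A2
    have key : Td = ((a:ℤ) * Td) * (Nat.gcdA a b * Nat.gcdA (Nat.gcd a b) L)
        + ((b:ℤ) * Td) * (Nat.gcdB a b * Nat.gcdA (Nat.gcd a b) L)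
        + ((L:ℤ) * Td) * (Nat.gcdB (Nat.gcd a b) L) := by
      linear_combination Td * A2 + Td * (Nat.gcdA (Nat.gcd a b) L) * A1
    rw [key]
    exact dvd_add (dvd_add (h3.mul_right _) (h1.mul_right _)) (h2.mul_right _)
  -- Part 1 : injectivity
  have hinj : Function.Injective (fun jp : Fin k × Fin (a + b) =>
      ((1 + (jp.1 : ℕ) * (q - 1) + (greedyPath a b (jp.2 : ℕ)).1 +
          q * (greedyPath a b (jp.2 : ℕ)).2 : ℕ) : ZMod p)) := by
    rintro ⟨j, t⟩ ⟨j', t'⟩ he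
    simp only at he
    have hdvd := ((ZMod.natCast_eq_natCast_iff _ _ _).mp he).dvd
    push_cast [Nat.cast_sub hq.le] at hdvd
    have c1 : ((greedyPath a b (t:ℕ)).1 : ℤ) + ((greedyPath a b (t:ℕ)).2 : ℤ) = (t:ℕ) := by
      exact_mod_cast TsetAux.gp_sum a b (t:ℕ)
    have c1' : ((greedyPath a b (t':ℕ)).1 : ℤ) + ((greedyPath a b (t':ℕ)).2 : ℤ) = (t':ℕ) := by
      exact_mod_cast TsetAux.gp_sum a b (t':ℕ)
    have hD := TsetAux.gp_D a b ha (t:ℕ)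
    have hD' := TsetAux.gp_D a b ha (t':ℕ)
    have e1 : ((1:ℤ) + (j':ℕ) * ((q:ℤ) - 1) + ((greedyPath a b (t':ℕ)).1 : ℤ)
          + (q:ℤ) * ((greedyPath a b (t':ℕ)).2 : ℤ))
        - ((1:ℤ) + (j:ℕ) * ((q:ℤ) - 1) + ((greedyPath a b (t:ℕ)).1 : ℤ)
          + (q:ℤ) * ((greedyPath a b (t:ℕ)).2 : ℤ))
        = ((1:ℤ) + ((j':ℕ):ℤ) * ((q:ℤ) - 1) + ((t':ℕ):ℤ)
            + ((q:ℤ) - 1) * ((greedyPath a b (t':ℕ)).2 : ℤ))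
        - ((1:ℤ) + ((j:ℕ):ℤ) * ((q:ℤ) - 1) + ((t:ℕ):ℤ)
            + ((q:ℤ) - 1) * ((greedyPath a b (t:ℕ)).2 : ℤ)) := by
      linear_combination c1' - c1
    rw [e1] at hdvd
    have e2 : ((b:ℤ) * (greedyPath a b (t:ℕ)).1 - (a:ℤ) * (greedyPath a b (t:ℕ)).2)
        = (b:ℤ) * ((t:ℕ):ℤ) - ((a:ℤ) + b) * ((greedyPath a b (t:ℕ)).2 : ℤ) := by
      linear_combination (b:ℤ) * c1
    have e2' : ((b:ℤ) * (greedyPath a b (t':ℕ)).1 - (a:ℤ) * (greedyPath a b (t':ℕ)).2)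
        = (b:ℤ) * ((t':ℕ):ℤ) - ((a:ℤ) + b) * ((greedyPath a b (t':ℕ)).2 : ℤ) := by
      linear_combination (b:ℤ) * c1'
    have hkp : ((a:ℤ) + b) * (k:ℤ) ≤ (p:ℤ) := by
      have : ((k:ℤ)) * ((a:ℤ) + b) = (r:ℤ) + s := by exact_mod_cast hkn
      have h2 : (r:ℤ) + s ≤ p := by exact_mod_cast hrs
      linarith [this, h2, mul_comm ((a:ℤ) + b) (k:ℤ)]
    obtain ⟨hJeq, hTeq⟩ := TsetAux.key_arith (p:ℤ) (q:ℤ) (a:ℤ) (b:ℤ) (L:ℤ) (k:ℤ)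
      ((j:ℕ):ℤ) ((j':ℕ):ℤ) ((t:ℕ):ℤ) ((t':ℕ):ℤ)
      ((greedyPath a b (t:ℕ)).2 : ℤ) ((greedyPath a b (t':ℕ)).2 : ℤ)
      ((b:ℤ) * (greedyPath a b (t:ℕ)).1 - (a:ℤ) * (greedyPath a b (t:ℕ)).2)
      ((b:ℤ) * (greedyPath a b (t':ℕ)).1 - (a:ℤ) * (greedyPath a b (t':ℕ)).2)
      (by exact_mod_cast Nat.pos_of_ne_zero (NeZero.ne p))
      (by exact_mod_cast habq)
      (by positivity) (by positivity)
      (by exact_mod_cast j.isLt) (by exact_mod_cast j'.isLt)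
      (by positivity) (by positivity)
      (by exact_mod_cast t.isLt) (by exact_mod_cast t'.isLt)
      e2 e2' hD.1 hD.2 hD'.1 hD'.2 hkp hgcd hdvd
    have hj : j = j' := by
      apply Fin.ext; exact_mod_cast hJeq
    have ht : t = t' := by
      apply Fin.ext; exact_mod_cast hTeq
    rw [hj, ht]
  refine ⟨hinj, ?_⟩
  haveI hnz : NeZero (a + b) := ⟨by omega⟩
  set F : Fin k × Fin (a + b) → ZMod p := fun jp =>
    ((1 + (jp.1 : ℕ) * (q - 1) + (greedyPath a b (jp.2 : ℕ)).1 +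
        q * (greedyPath a b (jp.2 : ℕ)).2 : ℕ) : ZMod p) with hFdef
  have hinjF : Function.Injective F := hinj
  have hFapp : ∀ w : Fin k × Fin (a + b), F w =
      ((1 + (w.1 : ℕ) * (q - 1) + (greedyPath a b (w.2 : ℕ)).1 +
        q * (greedyPath a b (w.2 : ℕ)).2 : ℕ) : ZMod p) := fun w => rfl
  set Femb : (Fin k × Fin (a + b)) ↪ ZMod p := ⟨F, hinjF⟩ with hFemb
  set c : Equiv.Perm (Fin k × Fin (a + b)) :=
    Equiv.prodCongr (Equiv.refl (Fin k)) (Equiv.addRight (1 : Fin (a + b))) with hc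
  set σ : Equiv.Perm (ZMod p) := c.viaEmbedding Femb with hσ
  have hgpend : greedyPath a b (a + b) = (a, b) := TsetAux.gp_end a b ha hb
  have hpz : ((p : ℕ) : ZMod p) = 0 := ZMod.natCast_self p
  have hA' : ((a : ℕ) : ZMod p) + ((b : ℕ) : ZMod p) * ((q : ℕ) : ZMod p) = 0 := by
    have : ((a + b * q : ℕ) : ZMod p) = ((L * p : ℕ) : ZMod p) := by rw [habq]
    push_cast at this
    rw [hpz, mul_zero] at this
    linear_combination this
  have hFval : ∀ w : Fin k × Fin (a + b), σ (F w) = F w +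
      (if b * (greedyPath a b (w.2 : ℕ)).1 ≤ a * (greedyPath a b (w.2 : ℕ)).2
       then (1 : ZMod p) else ((q : ℕ) : ZMod p)) := by
    rintro ⟨j, t⟩
    have h1 : σ (F (j, t)) = F (j, t + 1) := by
      have h2 : σ (Femb (j, t)) = Femb (c (j, t)) := Equiv.Perm.viaEmbedding_apply c Femb (j, t)
      have h3 : c (j, t) = (j, t + 1) := by
        simp [hc, Equiv.prodCongr_apply, Equiv.coe_addRight]
      rw [h3] at h2
      exact h2
    rw [h1, hFapp, hFapp]
    simp only
    have hvadd : ((t + 1 : Fin (a + b)) : ℕ) = ((t : ℕ) + 1) % (a + b) := by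
      rw [Fin.val_add, Fin.val_one', Nat.add_mod_mod]
    have htlt := t.isLt
    by_cases hlt : (t : ℕ) + 1 < a + b
    · have hv : ((t + 1 : Fin (a + b)) : ℕ) = (t : ℕ) + 1 := by
        rw [hvadd]; exact Nat.mod_eq_of_lt hlt
      rw [hv]
      by_cases hcond : b * (greedyPath a b (t : ℕ)).1 ≤ a * (greedyPath a b (t : ℕ)).2
      · have hgp : greedyPath a b ((t : ℕ) + 1) =
            ((greedyPath a b (t : ℕ)).1 + 1, (greedyPath a b (t : ℕ)).2) := by
          rw [TsetAux.gp_succ, if_pos hcond]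
        rw [hgp, if_pos hcond]
        push_cast [Nat.cast_sub hq.le]
        ring
      · have hgp : greedyPath a b ((t : ℕ) + 1) =
            ((greedyPath a b (t : ℕ)).1, (greedyPath a b (t : ℕ)).2 + 1) := by
          rw [TsetAux.gp_succ, if_neg hcond]
        rw [hgp, if_neg hcond]
        push_cast [Nat.cast_sub hq.le]
        ring
    · have ht1 : (t : ℕ) + 1 = a + b := by omega
      have hv0 : ((t + 1 : Fin (a + b)) : ℕ) = 0 := by
        rw [hvadd, ht1, Nat.mod_self]
      rw [hv0]
      have hstep := TsetAux.gp_succ a b (t : ℕ)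
      rw [ht1, hgpend] at hstep
      by_cases hcond : b * (greedyPath a b (t : ℕ)).1 ≤ a * (greedyPath a b (t : ℕ)).2
      · rw [if_pos hcond] at hstep
        rw [if_pos hcond]
        have hxa : a = (greedyPath a b (t : ℕ)).1 + 1 := congrArg Prod.fst hstep
        have hyb : b = (greedyPath a b (t : ℕ)).2 := congrArg Prod.snd hstep
        have hX' : ((greedyPath a b (t : ℕ)).1 : ZMod p) + 1 = ((a : ℕ) : ZMod p) := by
          exact_mod_cast (congrArg (Nat.cast : ℕ → ZMod p) hxa).symm
        have hY' : ((greedyPath a b (t : ℕ)).2 : ZMod p) = ((b : ℕ) : ZMod p) :=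
          (congrArg (Nat.cast : ℕ → ZMod p) hyb).symm
        show ((1 + (j : ℕ) * (q - 1) + (greedyPath a b 0).1 +
            q * (greedyPath a b 0).2 : ℕ) : ZMod p) = _
        have hgp0 : greedyPath a b 0 = (0, 0) := rfl
        rw [hgp0]
        push_cast [Nat.cast_sub hq.le]
        linear_combination -hA' - hX' - ((q : ℕ) : ZMod p) * hY'
      · rw [if_neg hcond] at hstep
        rw [if_neg hcond]
        have hxa : a = (greedyPath a b (t : ℕ)).1 := congrArg Prod.fst hstep
        have hyb : b = (greedyPath a b (t : ℕ)).2 + 1 := congrArg Prod.snd hstep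
        have hX' : ((greedyPath a b (t : ℕ)).1 : ZMod p) = ((a : ℕ) : ZMod p) :=
          (congrArg (Nat.cast : ℕ → ZMod p) hxa).symm
        have hY' : ((greedyPath a b (t : ℕ)).2 : ZMod p) + 1 = ((b : ℕ) : ZMod p) := by
          exact_mod_cast (congrArg (Nat.cast : ℕ → ZMod p) hyb).symm
        show ((1 + (j : ℕ) * (q - 1) + (greedyPath a b 0).1 +
            q * (greedyPath a b 0).2 : ℕ) : ZMod p) = _
        have hgp0 : greedyPath a b 0 = (0, 0) := rfl
        rw [hgp0]
        push_cast [Nat.cast_sub hq.le]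
        linear_combination -hA' - hX' - ((q : ℕ) : ZMod p) * hY'
  -- nonvanishing facts
  have h1ne : (1 : ZMod p) ≠ 0 := one_ne_zero
  have hqne0 : ((q : ℕ) : ZMod p) ≠ 0 := by
    intro h
    have hd := (ZMod.natCast_eq_zero_iff q p).mp h
    have := Nat.le_of_dvd (by omega) hd
    omega
  have hqne1 : ((q : ℕ) : ZMod p) ≠ 1 := by
    intro h
    have h' : ((q : ℕ) : ZMod p) = ((1 : ℕ) : ZMod p) := by simpa using h
    have h2 := (ZMod.natCast_eq_natCast_iff _ _ _).mp h'
    unfold Nat.ModEq at h2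
    rw [Nat.mod_eq_of_lt hqp, Nat.mod_eq_of_lt hp1] at h2
    omega
  have hnotmem : ∀ z : ZMod p, z ∉ Set.range F → σ z = z := by
    intro z hz
    exact Equiv.Perm.viaEmbedding_apply_of_notMem c Femb z hz
  have hmoved : ∀ w : Fin k × Fin (a + b), σ (F w) ≠ F w := by
    intro w h
    rw [hFval w] at h
    have h0 : (if b * (greedyPath a b (w.2 : ℕ)).1 ≤ a * (greedyPath a b (w.2 : ℕ)).2
        then (1 : ZMod p) else ((q : ℕ) : ZMod p)) = 0 := by
      have := add_eq_left.mp h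
      exact this
    split at h0
    · exact h1ne h0
    · exact hqne0 h0
  -- the three filter identities
  set Rimg := (univ : Finset (Fin k × Fin (a + b))).image F with hRimg
  have hfix : (univ.filter fun z : ZMod p => σ z = z) = Rimgᶜ := by
    ext z
    simp only [mem_filter, mem_univ, true_and, mem_compl, hRimg, Finset.mem_image]
    constructor
    · rintro hz ⟨w, rfl⟩
      exact hmoved w hz
    · intro hz
      apply hnotmem
      rintro ⟨w, rfl⟩
      exact hz ⟨w, rfl⟩
  have hone : (univ.filter fun z : ZMod p => σ z - z = 1) =
      (univ.filter fun w : Fin k × Fin (a + b) =>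
        b * (greedyPath a b (w.2 : ℕ)).1 ≤ a * (greedyPath a b (w.2 : ℕ)).2).image F := by
    ext z
    simp only [mem_filter, mem_univ, true_and, Finset.mem_image]
    constructor
    · intro hz
      by_cases hzr : z ∈ Set.range F
      · obtain ⟨w, rfl⟩ := hzr
        rw [hFval w, add_sub_cancel_left] at hz
        by_cases hcond : b * (greedyPath a b (w.2 : ℕ)).1 ≤ a * (greedyPath a b (w.2 : ℕ)).2
        · exact ⟨w, hcond, rfl⟩
        · rw [if_neg hcond] at hz
          exact absurd hz hqne1
      · rw [hnotmem z hzr, sub_self] at hz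
        exact absurd hz.symm h1ne
    · rintro ⟨w, hcond, rfl⟩
      rw [hFval w, add_sub_cancel_left, if_pos hcond]
  have hqf : (univ.filter fun z : ZMod p => σ z - z = ((q : ℕ) : ZMod p)) =
      (univ.filter fun w : Fin k × Fin (a + b) =>
        ¬ (b * (greedyPath a b (w.2 : ℕ)).1 ≤ a * (greedyPath a b (w.2 : ℕ)).2)).image F := by
    ext z
    simp only [mem_filter, mem_univ, true_and, Finset.mem_image]
    constructor
    · intro hz
      by_cases hzr : z ∈ Set.range F
      · obtain ⟨w, rfl⟩ := hzr
        rw [hFval w, add_sub_cancel_left] at hz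
        by_cases hcond : b * (greedyPath a b (w.2 : ℕ)).1 ≤ a * (greedyPath a b (w.2 : ℕ)).2
        · rw [if_pos hcond] at hz
          exact absurd hz.symm hqne1
        · exact ⟨w, hcond, rfl⟩
      · rw [hnotmem z hzr, sub_self] at hz
        exact absurd hz.symm hqne0
    · rintro ⟨w, hcond, rfl⟩
      rw [hFval w, add_sub_cancel_left, if_neg hcond]
  -- cardinalities
  have hcount_east : ((univ : Finset (Fin (a + b))).filter fun t : Fin (a + b) =>
      b * (greedyPath a b (t : ℕ)).1 ≤ a * (greedyPath a b (t : ℕ)).2).card = a := by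
    rw [TsetAux.card_filter_fin (a + b)
      (fun i => b * (greedyPath a b i).1 ≤ a * (greedyPath a b i).2)]
    rw [← TsetAux.gp_count a b (a + b), hgpend]
  have hsplit : ((univ : Finset (Fin (a + b))).filter fun t : Fin (a + b) =>
      ¬ (b * (greedyPath a b (t : ℕ)).1 ≤ a * (greedyPath a b (t : ℕ)).2)).card = b := by
    have htot := Finset.card_filter_add_card_filter_not
      (s := (univ : Finset (Fin (a + b))))
      (p := fun t : Fin (a + b) => b * (greedyPath a b (t : ℕ)).1 ≤ a * (greedyPath a b (t : ℕ)).2)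
    rw [hcount_east, Finset.card_univ, Fintype.card_fin] at htot
    omega
  have hprod_east : ((univ : Finset (Fin k × Fin (a + b))).filter fun w =>
      b * (greedyPath a b (w.2 : ℕ)).1 ≤ a * (greedyPath a b (w.2 : ℕ)).2)
      = (univ : Finset (Fin k)) ×ˢ ((univ : Finset (Fin (a + b))).filter fun t : Fin (a + b) =>
        b * (greedyPath a b (t : ℕ)).1 ≤ a * (greedyPath a b (t : ℕ)).2) := by
    ext ⟨j, t⟩
    simp [Finset.mem_product]
  have hprod_north : ((univ : Finset (Fin k × Fin (a + b))).filter fun w =>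
      ¬ (b * (greedyPath a b (w.2 : ℕ)).1 ≤ a * (greedyPath a b (w.2 : ℕ)).2))
      = (univ : Finset (Fin k)) ×ˢ ((univ : Finset (Fin (a + b))).filter fun t : Fin (a + b) =>
        ¬ (b * (greedyPath a b (t : ℕ)).1 ≤ a * (greedyPath a b (t : ℕ)).2)) := by
    ext ⟨j, t⟩
    simp [Finset.mem_product]
  have hRcard : Rimg.card = r + s := by
    rw [hRimg, Finset.card_image_of_injective _ hinjF, Finset.card_univ,
      Fintype.card_prod, Fintype.card_fin, Fintype.card_fin]
    exact hkn
  refine ⟨σ, ?_, ?_, ?_⟩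
  · rw [hfix, Finset.card_compl, hRcard, ZMod.card]
    omega
  · rw [hone, Finset.card_image_of_injective _ hinjF, hprod_east,
      Finset.card_product, Finset.card_univ, Fintype.card_fin, hcount_east]
    exact hra
  · rw [hqf, Finset.card_image_of_injective _ hinjF, hprod_north,
      Finset.card_product, Finset.card_univ, Fintype.card_fin, hsplit]
    exact hsb
end

section
/- T_{p,q}(r,s) is nonempty if and only if p divides r + sq. -/
open Finset

/-!
The displacements `σ j - j` of a permutation of `ZMod p` sum to `0`; for `σ ∈ T_{p,q}(r,s)` they
sum to `r + s q`, which gives necessity.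

Conversely, in the coordinate `v x = (s x).val ∈ [0, p)` a step `x ↦ x + 1` raises `v` by `s`,
and when `r + s q ≡ 0` a step `x ↦ x + q` lowers it by `r`. Hence moving the points with `v` in
`[p - r - s, p - s)` by `1` and those with `v` in `[p - s, p)` by `q` exchanges these two blocks of
values, so it is injective. A carry count shows that a top block `[p - t, p)` with `t ≡ s y` holds
the `v`-values of exactly `t` points, which gives the block sizes `r` and `s`.
-/

theorem sum_eq_sum_card_filter_eq_smul {α M : Type*} [Fintype α] [AddCommMonoid M]
    [DecidableEq M] (f : α → M) (S : Finset M)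
    (hS : ∑ v ∈ S, #{x | f x = v} = Fintype.card α) :
    ∑ x, f x = ∑ v ∈ S, #{x | f x = v} • v := by
  have hall : ({x | f x ∈ S} : Finset α) = univ := by
    rw [← card_eq_iff_eq_univ, ← hS, sum_card_fiberwise_eq_card_filter]
  have hmaps : ∀ x ∈ (univ : Finset α), f x ∈ S := fun x hx => by
    rw [← hall, mem_filter] at hx
    exact hx.2
  rw [← sum_fiberwise_of_maps_to hmaps]
  refine sum_congr rfl fun v _ => ?_
  rw [sum_congr rfl fun x hx => (mem_filter.mp hx).2, sum_const]

namespace ZMod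

variable {n : ℕ} [NeZero n]

/-- Summing `(a * (x + y)).val + n * [carry] = (a * x).val + (a * y).val` over `x`; the
translation `x ↦ x + y` leaves `∑ x, (a * x).val` unchanged. -/
theorem card_filter_le_val_mul_add_val_mul (a y : ZMod n) :
    #{x | n ≤ (a * x).val + (a * y).val} = (a * y).val := by
  have hcarry : ∀ x : ZMod n,
      (a * (x + y)).val + n * (if n ≤ (a * x).val + (a * y).val then 1 else 0) =
        (a * x).val + (a * y).val := by
    intro x
    rw [mul_add]
    split_ifs with h
    · rw [val_add_of_le h]; omega
    · rw [val_add_of_lt (not_le.mp h)]; simp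
  have hsum := sum_congr rfl fun x (_ : x ∈ (univ : Finset (ZMod n))) => hcarry x
  have hshift : ∑ x, (a * (x + y)).val = ∑ x, (a * x).val :=
    Fintype.sum_equiv (Equiv.addRight y) _ _ fun _ => rfl
  rw [sum_add_distrib, sum_add_distrib, ← mul_sum, sum_boole, Nat.cast_id, hshift, sum_const,
    card_univ, card, smul_eq_mul] at hsum
  exact Nat.eq_of_mul_eq_mul_left (NeZero.pos n) (by omega)

theorem card_filter_sub_le_val_mul {a : ZMod n} {t : ℕ} (ht : t ≤ n)
    (hmem : ∃ y, a * y = t) : #{x | n - t ≤ (a * x).val} = t := by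
  obtain rfl | htn := ht.eq_or_lt
  · simp
  obtain ⟨y, hy⟩ := hmem
  have hval : (a * y).val = t := by rw [hy, val_natCast_of_lt htn]
  rw [← hval]
  refine (congrArg Finset.card (filter_congr fun x _ => ?_)).trans
    (card_filter_le_val_mul_add_val_mul a y)
  have := (a * y).val_lt
  omega

end ZMod

section BlockExchange

variable {p : ℕ} {r s : ℕ} {d : ZMod p}

variable (r s d) in
def blockShift (x : ZMod p) : ZMod p :=
  if p - s ≤ ((s : ZMod p) * x).val then d
  else if p - (r + s) ≤ ((s : ZMod p) * x).val then 1 else 0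

theorem val_mul_add_blockShift [NeZero p] (hrs : r + s ≤ p) (hd : (r : ZMod p) + s * d = 0)
    (x : ZMod p) :
    ((s : ZMod p) * (x + blockShift r s d x)).val =
      if p - s ≤ ((s : ZMod p) * x).val then ((s : ZMod p) * x).val - r
      else if p - (r + s) ≤ ((s : ZMod p) * x).val then ((s : ZMod p) * x).val + s
      else ((s : ZMod p) * x).val := by
  set v := ((s : ZMod p) * x).val with hv
  have hv_lt : v < p := ZMod.val_lt _
  have hsx : (s : ZMod p) * x = v := (ZMod.natCast_zmod_val _).symm
  unfold blockShift
  rw [← hv]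
  split_ifs with htop hmid
  · have hdown : (s : ZMod p) * (x + d) = ((v - r : ℕ) : ZMod p) := by
      rw [Nat.cast_sub (by omega), ← hsx]
      linear_combination hd
    rw [hdown, ZMod.val_natCast_of_lt (by omega)]
  · rw [mul_add, mul_one, hsx, ← Nat.cast_add, ZMod.val_natCast_of_lt (by omega)]
  · rw [add_zero]

theorem add_blockShift_injective [NeZero p] (hrs : r + s ≤ p) (hd : (r : ZMod p) + s * d = 0) :
    Function.Injective fun x => x + blockShift r s d x := by
  intro x y hxy
  have hv : ((s : ZMod p) * x).val = ((s : ZMod p) * y).val := by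
    have h := congrArg (fun z => ((s : ZMod p) * z).val) hxy
    simp only [val_mul_add_blockShift hrs hd] at h
    have := ((s : ZMod p) * x).val_lt
    have := ((s : ZMod p) * y).val_lt
    split_ifs at h <;> omega
  have hshift : blockShift r s d x = blockShift r s d y := by simp only [blockShift, hv]
  simpa only [hshift, add_left_inj] using hxy

theorem card_filter_sub_add_le_val_mul [NeZero p] (hrs : r + s ≤ p)
    (hd : (r : ZMod p) + s * d = 0) :
    #{x | p - (r + s) ≤ ((s : ZMod p) * x).val} = r + s :=
  ZMod.card_filter_sub_le_val_mul hrs ⟨1 - d, by push_cast; linear_combination -hd⟩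

theorem blockShift_eq_self_iff (hd0 : d ≠ 0) (hd1 : d ≠ 1) (x : ZMod p) :
    blockShift r s d x = d ↔ p - s ≤ ((s : ZMod p) * x).val := by
  unfold blockShift
  split_ifs <;> simp [*, hd0.symm, hd1.symm]

theorem blockShift_eq_one_iff (hd1 : d ≠ 1) (h10 : (1 : ZMod p) ≠ 0) (x : ZMod p) :
    blockShift r s d x = 1 ↔
      p - (r + s) ≤ ((s : ZMod p) * x).val ∧ ¬p - s ≤ ((s : ZMod p) * x).val := by
  unfold blockShift
  split_ifs <;> simp [*, h10.symm]

theorem blockShift_eq_zero_iff (hd0 : d ≠ 0) (h10 : (1 : ZMod p) ≠ 0) (x : ZMod p) :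
    blockShift r s d x = 0 ↔ ¬p - (r + s) ≤ ((s : ZMod p) * x).val := by
  unfold blockShift
  split_ifs with htop hmid
  · simp only [hd0, false_iff, not_not]
    omega
  · simp only [h10, hmid, not_true_eq_false]
  · simp only [hmid, not_false_eq_true]

theorem card_blockShift_eq_self [NeZero p] (hs : s ≤ p) (hd0 : d ≠ 0) (hd1 : d ≠ 1) :
    #{x | blockShift r s d x = d} = s := by
  simp_rw [blockShift_eq_self_iff hd0 hd1]
  exact ZMod.card_filter_sub_le_val_mul hs ⟨1, mul_one _⟩

theorem card_blockShift_eq_one [NeZero p] (hrs : r + s ≤ p) (hd : (r : ZMod p) + s * d = 0)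
    (hd1 : d ≠ 1) (h10 : (1 : ZMod p) ≠ 0) : #{x | blockShift r s d x = 1} = r := by
  have hsub : ({x | p - s ≤ ((s : ZMod p) * x).val} : Finset (ZMod p)) ⊆
      ({x | p - (r + s) ≤ ((s : ZMod p) * x).val} : Finset (ZMod p)) := by
    intro x
    simp only [mem_filter, mem_univ, true_and]
    omega
  simp_rw [blockShift_eq_one_iff hd1 h10]
  rw [filter_and_not, card_sdiff_of_subset hsub, card_filter_sub_add_le_val_mul hrs hd,
    ZMod.card_filter_sub_le_val_mul (by omega) ⟨1, mul_one _⟩, Nat.add_sub_cancel]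

theorem card_blockShift_eq_zero [NeZero p] (hrs : r + s ≤ p) (hd : (r : ZMod p) + s * d = 0)
    (hd0 : d ≠ 0) (h10 : (1 : ZMod p) ≠ 0) : #{x | blockShift r s d x = 0} = p - r - s := by
  have hsplit := card_filter_add_card_filter_not (s := univ)
    fun x : ZMod p => p - (r + s) ≤ ((s : ZMod p) * x).val
  rw [card_filter_sub_add_le_val_mul hrs hd, card_univ, ZMod.card] at hsplit
  simp_rw [blockShift_eq_zero_iff hd0 h10]
  omega

end BlockExchange

theorem Tset.natCast_add_mul_eq_zero {p q r s : ℕ} [NeZero p] (hrs : r + s ≤ p)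
    (h10 : (1 : ZMod p) ≠ 0) (hq0 : (q : ZMod p) ≠ 0) (hq1 : (q : ZMod p) ≠ 1)
    {σ : Equiv.Perm (ZMod p)} (hσ : σ ∈ Tset p q r s) : (r : ZMod p) + s * q = 0 := by
  obtain ⟨hfix, hone, hstep⟩ := hσ
  simp only [← sub_eq_zero (a := σ _)] at hfix
  have hvalues : (0 : ZMod p) ∉ ({1, (q : ZMod p)} : Finset (ZMod p)) := by
    simp [h10.symm, hq0.symm]
  have hcard : ∑ v ∈ {0, 1, (q : ZMod p)}, #{j | σ j - j = v} = Fintype.card (ZMod p) := by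
    rw [sum_insert hvalues, sum_pair hq1.symm, hfix, hone, hstep, ZMod.card]
    omega
  have hsum := sum_eq_sum_card_filter_eq_smul (fun j => σ j - j) _ hcard
  rw [sum_sub_distrib, Equiv.sum_comp σ (fun j => j), sub_self, sum_insert hvalues,
    sum_pair hq1.symm, hone, hstep] at hsum
  simpa [nsmul_eq_mul] using hsum.symm

theorem Tset.nonempty_of_natCast_add_mul_eq_zero {p q r s : ℕ} [NeZero p] (hrs : r + s ≤ p)
    (h10 : (1 : ZMod p) ≠ 0) (hq0 : (q : ZMod p) ≠ 0) (hq1 : (q : ZMod p) ≠ 1)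
    (hd : (r : ZMod p) + s * q = 0) : (Tset p q r s).Nonempty := by
  refine ⟨Equiv.ofBijective _ (add_blockShift_injective hrs hd).bijective_of_finite, ?_, ?_, ?_⟩
  all_goals simp only [Equiv.ofBijective_apply, add_sub_cancel_left, add_eq_left]
  · exact card_blockShift_eq_zero hrs hd hq0 h10
  · exact card_blockShift_eq_one hrs hd hq1 h10
  · exact card_blockShift_eq_self (by omega) hq0 hq1

/-- `T_{p,q}(r,s)` is nonempty if and only if `p` divides `r + sq`. -/
theorem Tset_nonempty_iff (p q r s : ℕ) [NeZero p] (hq : 1 < q) (hqp : q < p)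
    (hrs : r + s ≤ p) :
    (Tset p q r s).Nonempty ↔ p ∣ r + s * q := by
  have hcast_ne : ∀ a b : ℕ, a < p → b < p → a ≠ b → (a : ZMod p) ≠ b :=
    fun a b ha hb hab h => hab <| by
      rwa [ZMod.natCast_eq_natCast_iff', Nat.mod_eq_of_lt ha, Nat.mod_eq_of_lt hb] at h
  have h10 : (1 : ZMod p) ≠ 0 := by exact_mod_cast hcast_ne 1 0 (by omega) (by omega) one_ne_zero
  have hq0 : (q : ZMod p) ≠ 0 := by exact_mod_cast hcast_ne q 0 hqp (by omega) (by omega)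
  have hq1 : (q : ZMod p) ≠ 1 := by exact_mod_cast hcast_ne q 1 hqp (by omega) (by omega)
  rw [← ZMod.natCast_eq_zero_iff]
  push_cast
  exact ⟨fun ⟨_, hσ⟩ => Tset.natCast_add_mul_eq_zero hrs h10 hq0 hq1 hσ,
    Tset.nonempty_of_natCast_add_mul_eq_zero hrs h10 hq0 hq1⟩
end
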